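/- arXiv:2411.03117 — 6 statements merged into one kernel-verified Lean document; each statement's English description precedes it below -/
import Mathlib

section
/- Fix integers 0 < n₁ ≤ n₂ ≤ … ≤ n_m and let d̄ ∈ Z_{≥0}^m be an n̄-admissible composition with d_j ≠ 0 for all j. Let μ^{(0)} = (0) and let μ^{(j)} ∈ Ser^{n_j}_{d_j, μ^{(j−1)}} (j = 1,…,m) be the unique chain with μ^{(j)}₊ = (d₁,…,d_j)₊ (each μ^{(j−1)} extended by trailing zeros to length n_j). Then Sc_n̄ = {(i,j) : μ^{(j)}_i > 0 and μ^{(j−1)}_i = 0}. -/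
/-- A composition of length `nn` is encoded as a function `ℕ → ℕ` vanishing from
index `nn` on (0-based indexing).  `IsSerpentine nn d lam mu` says that
`mu ∈ Ser^nn_{d,lam}` is a `d`-serpentine associated with `lam`. -/
def IsSerpentine (nn d : ℕ) (lam mu : ℕ → ℕ) : Prop :=
  (∀ i, nn ≤ i → lam i = 0) ∧
  (∀ i, nn ≤ i → mu i = 0) ∧
  (∀ i, lam i ≤ mu i) ∧
  (∑ i ∈ Finset.range nn, (mu i - lam i)) = d ∧
  (∀ i j, i < j → j < nn → lam i ≤ lam j → mu i ≤ lam j) ∧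
  (∀ i j, i < j → j < nn → lam j < lam i → lam i ≤ mu j → mu i = lam i)

/-- `domSum f s` is the sum of the `s` largest entries of a (finitely supported)
function `f : ℕ → ℕ`, i.e. the `s`-th partial sum of the dominant part `f₊`. -/
noncomputable def domSum (f : ℕ → ℕ) (s : ℕ) : ℕ :=
  sSup ((fun T : Finset ℕ => ∑ i ∈ T, f i) '' {T : Finset ℕ | T.card ≤ s})

/-- `f₊ = g₊`: the dominant parts (non-increasing reorderings, padded by trailing
zeros) of the finitely supported functions `f` and `g` coincide. -/
def DomEq (f g : ℕ → ℕ) : Prop := ∀ s, domSum f s = domSum g s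

/-- `f₊ ≤ g₊` in the dominance order: `|f| = |g|` and every partial sum of the
dominant part of `g` is at least the corresponding one for `f`. -/
def DomLE (f g : ℕ → ℕ) : Prop :=
  (∀ s, domSum f s ≤ domSum g s) ∧ ∃ N, ∀ s, N ≤ s → domSum f s = domSum g s

/-- The composition `(λ, d)`: append the entry `d` to a length-`n` composition. -/
def appendComp (n : ℕ) (lam : ℕ → ℕ) (d : ℕ) : ℕ → ℕ :=
  fun i => if i < n then lam i else if i = n then d else 0

/-- The composition `(d₁, …, d_m)`: truncate `d` to its first `m` entries. -/
def truncComp (m : ℕ) (d : ℕ → ℕ) : ℕ → ℕ := fun i => if i < m then d i else 0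

/-- A chain of iterated serpentines `μ⁽⁰⁾ = (0)`, `μ⁽ʲ⁾ ∈ Ser^{n_j}_{d_j, μ⁽ʲ⁻¹⁾}`. -/
def SerpChain (n : ℕ → ℕ) (m : ℕ) (d : ℕ → ℕ) (μ : ℕ → ℕ → ℕ) : Prop :=
  (∀ i, μ 0 i = 0) ∧ ∀ j, j < m → IsSerpentine (n j) (d j) (μ j) (μ (j + 1))

/-- `d̄ ∈ Z_{≥0}^m` is `n̄`-admissible: for each `s < m` the number of nonzero
entries among `d_0, …, d_s` is at most `n_s`. -/
def NAdmissible (n : ℕ → ℕ) (m : ℕ) (d : ℕ → ℕ) : Prop :=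
  ∀ s, s < m → ((Finset.range (s + 1)).filter (fun j => d j ≠ 0)).card ≤ n s

/-- Cells are pairs `(i, j)` (row `i`, column `j`, both 0-based); the Young diagram
`Y_n̄` consists of the cells with `j < m` and `i < n j`.  `IsSCorner n m Rr Rc c`
says that, after removing the rows in `Rr` and the columns in `Rc` from `Y_n̄`,
the cell `c` is a corner of the remaining (renumbered) Young diagram: it is the
lowest remaining cell of its column and the leftmost remaining cell of its row. -/
def IsSCorner (n : ℕ → ℕ) (m : ℕ) (Rr Rc : Set ℕ) (c : ℕ × ℕ) : Prop :=
  c.2 < m ∧ c.1 < n c.2 ∧ c.1 ∉ Rr ∧ c.2 ∉ Rc ∧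
  (∀ i, c.1 < i → i < n c.2 → i ∈ Rr) ∧
  (∀ j, j < c.2 → j ∉ Rc → n j ≤ c.1)

/-- An execution of the thin-hook removal process on `Y_n̄`: a list of cells, each
of which is a corner of the diagram remaining after deleting the rows and columns
of the previously recorded cells, such that at the end every cell of `Y_n̄` lies
in a removed row or in a removed column (the diagram is empty). -/
def IsExec (n : ℕ → ℕ) (m : ℕ) (l : List (ℕ × ℕ)) : Prop :=
  (∀ t (ht : t < l.length),
    IsSCorner n m {i | ∃ c ∈ l.take t, c.1 = i} {j | ∃ c ∈ l.take t, c.2 = j}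
      (l.get ⟨t, ht⟩)) ∧
  (∀ i j, j < m → i < n j → (∃ c ∈ l, c.1 = i) ∨ (∃ c ∈ l, c.2 = j))

/-- `S` is the set of staircase corners of `Y_n̄`: the recorded set of some
execution of the thin-hook removal process. -/
def IsScSet (n : ℕ → ℕ) (m : ℕ) (S : Set (ℕ × ℕ)) : Prop :=
  ∃ l : List (ℕ × ℕ), IsExec n m l ∧ S = {c | c ∈ l}

/-- The partial order on staircase corners: `(i,j) ⪯ (i',j')` iff `i ≤ i'` and
`j' ≤ j` (to increase, move down and to the left). -/
def ScLE (c c' : ℕ × ℕ) : Prop := c.1 ≤ c'.1 ∧ c'.2 ≤ c.2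

/-- A DL-dense array: an array supported on the staircase corners `S` which is
order-preserving for the staircase-corner order. -/
def DLDense (S : Set (ℕ × ℕ)) (R : ℕ × ℕ → ℕ) : Prop :=
  (∀ c, c ∉ S → R c = 0) ∧ ∀ c c', c ∈ S → c' ∈ S → ScLE c c' → R c ≤ R c'

/-- Vertical weight of an array: the sum of the entries in column `j`. -/
def vrtW (n : ℕ → ℕ) (R : ℕ × ℕ → ℕ) (j : ℕ) : ℕ := ∑ i ∈ Finset.range (n j), R (i, j)

/-- Horizontal weight of an array: the sum of the entries in row `i`. -/
def horW (m : ℕ) (R : ℕ × ℕ → ℕ) (i : ℕ) : ℕ := ∑ j ∈ Finset.range m, R (i, j)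

lemma sum_le_of_van (f : ℕ → ℕ) (N : ℕ) (hf : ∀ i, N ≤ i → f i = 0) (T : Finset ℕ) :
    ∑ i ∈ T, f i ≤ ∑ i ∈ Finset.range N, f i := by
  have h1 : ∑ i ∈ T ∩ Finset.range N, f i = ∑ i ∈ T, f i := by
    refine Finset.sum_subset Finset.inter_subset_left (fun x hx hx' => hf x ?_)
    by_contra h
    exact hx' (Finset.mem_inter.2 ⟨hx, Finset.mem_range.2 (Nat.lt_of_not_le h)⟩)
  rw [← h1]
  exact Finset.sum_le_sum_of_subset Finset.inter_subset_right

lemma bddAbove_domSet (f : ℕ → ℕ) (N : ℕ) (hf : ∀ i, N ≤ i → f i = 0) (s : ℕ) :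
    BddAbove ((fun T : Finset ℕ => ∑ i ∈ T, f i) '' {T : Finset ℕ | T.card ≤ s}) := by
  refine ⟨∑ i ∈ Finset.range N, f i, ?_⟩
  rintro x ⟨T, hT, rfl⟩
  exact sum_le_of_van f N hf T

lemma nonempty_domSet (f : ℕ → ℕ) (s : ℕ) :
    ((fun T : Finset ℕ => ∑ i ∈ T, f i) '' {T : Finset ℕ | T.card ≤ s}).Nonempty :=
  ⟨0, ⟨∅, by simp, by simp⟩⟩

lemma le_domSum (f : ℕ → ℕ) (N : ℕ) (hf : ∀ i, N ≤ i → f i = 0) (s : ℕ) (T : Finset ℕ)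
    (hT : T.card ≤ s) : ∑ i ∈ T, f i ≤ domSum f s :=
  le_csSup (bddAbove_domSet f N hf s) ⟨T, hT, rfl⟩

lemma domSum_le_total (f : ℕ → ℕ) (N : ℕ) (hf : ∀ i, N ≤ i → f i = 0) (s : ℕ) :
    domSum f s ≤ ∑ i ∈ Finset.range N, f i := by
  refine csSup_le (nonempty_domSet f s) ?_
  rintro x ⟨T, hT, rfl⟩
  exact sum_le_of_van f N hf T

lemma domSum_eq_total (f : ℕ → ℕ) (N : ℕ) (hf : ∀ i, N ≤ i → f i = 0) (s : ℕ) (hs : N ≤ s) :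
    domSum f s = ∑ i ∈ Finset.range N, f i :=
  le_antisymm (domSum_le_total f N hf s)
    (le_domSum f N hf s (Finset.range N) (by simpa using hs))

lemma domSum_lt_total (g : ℕ → ℕ) (k s : ℕ) (hg : ∀ i, k ≤ i → g i = 0)
    (hpos : ∀ i, i < k → g i ≠ 0) (hs : s < k) :
    domSum g s < ∑ i ∈ Finset.range k, g i := by
  obtain ⟨T, hT, hTs⟩ := Nat.sSup_mem (nonempty_domSet g s) (bddAbove_domSet g k hg s)
  simp only [Set.mem_setOf_eq] at hT
  rw [domSum, ← hTs]
  show ∑ i ∈ T, g i < ∑ i ∈ Finset.range k, g i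
  obtain ⟨x, hx, hxT⟩ : ∃ x ∈ Finset.range k, x ∉ T := by
    by_contra h
    push_neg at h
    have : (Finset.range k).card ≤ T.card := Finset.card_le_card h
    simp only [Finset.card_range] at this
    omega
  have h2 : ∑ i ∈ T ∩ Finset.range k, g i = ∑ i ∈ T, g i := by
    refine Finset.sum_subset Finset.inter_subset_left (fun y hy hy' => hg y ?_)
    by_contra h
    exact hy' (Finset.mem_inter.2 ⟨hy, Finset.mem_range.2 (Nat.lt_of_not_le h)⟩)
  rw [← h2]
  refine Finset.sum_lt_sum_of_subset Finset.inter_subset_right hx ?_ ?_ ?_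
  · simp [hxT]
  · exact Nat.pos_of_ne_zero (hpos x (Finset.mem_range.1 hx))
  · intros; exact Nat.zero_le _

/-- support of a function within `range N` -/
def suppF (f : ℕ → ℕ) (N : ℕ) : Finset ℕ := (Finset.range N).filter (fun i => f i ≠ 0)

/-- the new nonzero index created at step `j` of the chain -/
noncomputable def newIdx (μ : ℕ → ℕ → ℕ) (N j : ℕ) : ℕ :=
  (suppF (μ (j+1)) N \ suppF (μ j) N).sup id

lemma take_sub {α : Type*} (l : List α) {t1 t2 : ℕ} (h : t1 ≤ t2) : l.take t1 ⊆ l.take t2 := by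
  have : l.take t1 = (l.take t2).take t1 := by rw [List.take_take, min_eq_left h]
  rw [this]
  exact List.take_subset _ _


/-- Lemma 1.22.  Let `d̄` be an `n̄`-admissible composition with
all entries nonzero and let `μ⁽⁰⁾ = (0)`, `μ⁽ʲ⁾ ∈ Ser^{n_j}_{d_j, μ⁽ʲ⁻¹⁾}` be the
unique chain with `μ⁽ʲ⁾₊ = (d₁,…,d_j)₊`.  Then the staircase corners are exactly
the cells `(i,j)` where the chain first becomes nonzero in row `i`:
`Sc_n̄ = {(i,j) : μ⁽ʲ⁺¹⁾_i > 0, μ⁽ʲ⁾_i = 0}`. -/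
theorem staircase_corners_from_chain (m : ℕ) (hm : 0 < m)
    (n : ℕ → ℕ) (hn0 : 0 < n 0)
    (hmono : ∀ j k, j ≤ k → k < m → n j ≤ n k)
    (S : Set (ℕ × ℕ)) (hS : IsScSet n m S)
    (d : ℕ → ℕ) (hdpos : ∀ j, j < m → d j ≠ 0) (hdsupp : ∀ j, m ≤ j → d j = 0)
    (hadm : NAdmissible n m d)
    (μ : ℕ → ℕ → ℕ) (hchain : SerpChain n m d μ)
    (hdom : ∀ j, j ≤ m → DomEq (μ j) (truncComp j d)) :
    S = {p : ℕ × ℕ | p.2 < m ∧ 0 < μ (p.2 + 1) p.1 ∧ μ p.2 p.1 = 0} := by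
  obtain ⟨l, hexec, rfl⟩ := hS
  set N := n (m - 1) with hN
  set F : ℕ → Finset ℕ := fun j => suppF (μ j) N with hF
  set z : ℕ → ℕ := fun j => newIdx μ N j with hz
  have hser : ∀ j, j < m → IsSerpentine (n j) (d j) (μ j) (μ (j + 1)) := hchain.2
  have hvanS : ∀ j, j < m → ∀ i, n j ≤ i → μ (j+1) i = 0 := fun j hj => (hser j hj).2.1
  have hmle : ∀ j, j < m → ∀ i, μ j i ≤ μ (j+1) i := fun j hj => (hser j hj).2.2.1
  have hiii : ∀ j, j < m → ∀ i1 i2, i1 < i2 → i2 < n j → μ j i1 ≤ μ j i2 →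
      μ (j+1) i1 ≤ μ j i2 := fun j hj => (hser j hj).2.2.2.2.1
  have hNj : ∀ j, j < m → n j ≤ N := fun j hj => hmono j (m-1) (by omega) (by omega)
  have hvan : ∀ j, j ≤ m → ∀ i, N ≤ i → μ j i = 0 := by
    intro j hj i hi
    cases j with
    | zero => exact hchain.1 i
    | succ k => exact hvanS k (by omega) i (le_trans (hNj k (by omega)) hi)
  have hFmem : ∀ j, j ≤ m → ∀ i, i ∈ F j ↔ μ j i ≠ 0 := by
    intro j hj i
    simp only [hF, suppF, Finset.mem_filter, Finset.mem_range]
    constructor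
    · exact fun h => h.2
    · intro h
      refine ⟨?_, h⟩
      by_contra hc
      exact h (hvan j hj i (Nat.le_of_not_lt hc))
  have hnbound : ∀ j, j < m → ∀ i, μ (j+1) i ≠ 0 → i < n j := by
    intro j hj i h
    by_contra hc
    exact h (hvanS j hj i (Nat.le_of_not_lt hc))
  have hsub : ∀ j, j < m → F j ⊆ F (j+1) := by
    intro j hj i hi
    rw [hFmem j (le_of_lt hj)] at hi
    rw [hFmem (j+1) hj]
    intro h0
    exact hi (Nat.le_antisymm (h0 ▸ hmle j hj i) (Nat.zero_le _))
  -- at most one new index per step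
  have hone : ∀ j, j < m → (F (j+1) \ F j).card ≤ 1 := by
    intro j hj
    rw [Finset.card_le_one]
    intro a ha b hb
    simp only [Finset.mem_sdiff, hFmem (j+1) hj, hFmem j (le_of_lt hj), not_not] at ha hb
    by_contra hne
    rcases Nat.lt_or_ge a b with h | h
    · have hb' : b < n j := hnbound j hj b hb.1
      have := hiii j hj a b h hb' (by rw [ha.2, hb.2])
      rw [hb.2] at this
      exact ha.1 (Nat.le_antisymm this (Nat.zero_le _))
    · have h' : b < a := by omega
      have ha' : a < n j := hnbound j hj a ha.1
      have := hiii j hj b a h' ha' (by rw [ha.2, hb.2])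
      rw [ha.2] at this
      exact hb.1 (Nat.le_antisymm this (Nat.zero_le _))
  have hadmk : ∀ k, k < m → k + 1 ≤ n k := by
    intro k hk
    have := hadm k hk
    rwa [Finset.filter_true_of_mem (fun i hi => hdpos i (by
      simp only [Finset.mem_range] at hi; omega)), Finset.card_range] at this
  have hkey : ∀ j, j ≤ m → (F j).card = j := by
    intro j
    induction j with
    | zero =>
      intro _
      simp [hF, suppF, Finset.filter_eq_empty_iff, hchain.1]
    | succ k ih =>
      intro hk1
      have hk : k < m := hk1
      have ihc := ih (le_of_lt hk)
      have hcard_eq : (F (k+1)).card = (F (k+1) \ F k).card + k := by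
        rw [Finset.card_sdiff_of_subset (hsub k hk), ihc]
        have := Finset.card_le_card (hsub k hk)
        omega
      have hne0 : (F (k+1) \ F k).card ≠ 0 := by
        intro h0
        have heq : F (k+1) = F k :=
          Finset.Subset.antisymm
            (by rwa [Finset.card_eq_zero, Finset.sdiff_eq_empty_iff_subset] at h0)
            (hsub k hk)
        -- domSum contradiction
        have hvan1 : ∀ i, N ≤ i → μ (k+1) i = 0 := hvan (k+1) hk1
        have hgvan : ∀ i, k+1 ≤ i → truncComp (k+1) d i = 0 := by
          intro i hi; simp only [truncComp]; rw [if_neg (by omega)]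
        have hgpos : ∀ i, i < k+1 → truncComp (k+1) d i ≠ 0 := by
          intro i hi; simp only [truncComp]; rw [if_pos hi]; exact hdpos i (by omega)
        have hNk : k+1 ≤ N := le_trans (hadmk k hk) (hNj k hk)
        have htot : ∑ i ∈ Finset.range N, μ (k+1) i
            = ∑ i ∈ Finset.range (k+1), truncComp (k+1) d i := by
          rw [← domSum_eq_total (μ (k+1)) N hvan1 N le_rfl, hdom (k+1) hk1 N,
            domSum_eq_total (truncComp (k+1) d) (k+1) hgvan N hNk]
        have hFsum : ∑ i ∈ F (k+1), μ (k+1) i = ∑ i ∈ Finset.range N, μ (k+1) i := by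
          simp only [hF, suppF]
          exact Finset.sum_filter_ne_zero (f := fun i => μ (k+1) i) (Finset.range N)
        have hlow : ∑ i ∈ Finset.range N, μ (k+1) i ≤ domSum (μ (k+1)) k := by
          rw [← hFsum]
          exact le_domSum (μ (k+1)) N hvan1 k (F (k+1)) (by rw [heq, ihc])
        have hup : domSum (truncComp (k+1) d) k
            < ∑ i ∈ Finset.range (k+1), truncComp (k+1) d i :=
          domSum_lt_total (truncComp (k+1) d) (k+1) k hgvan hgpos (Nat.lt_succ_self k)
        rw [hdom (k+1) hk1 k] at hlow
        omega
      have := hone k hk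
      omega
  have hzspec : ∀ j, j < m → F (j+1) \ F j = {z j} := by
    intro j hj
    have h1 : (F (j+1) \ F j).card = 1 := by
      rw [Finset.card_sdiff_of_subset (hsub j hj), hkey (j+1) hj, hkey j (le_of_lt hj)]
      omega
    obtain ⟨a, ha⟩ := Finset.card_eq_one.1 h1
    have hza : z j = a := by
      show (F (j+1) \ F j).sup id = a
      rw [ha, Finset.sup_singleton]
      rfl
    rw [hza, ha]
  have hzin : ∀ j, j < m → z j ∈ F (j+1) ∧ z j ∉ F j := by
    intro j hj
    have hm' : z j ∈ F (j+1) \ F j := by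
      rw [hzspec j hj]; exact Finset.mem_singleton_self _
    exact ⟨(Finset.mem_sdiff.1 hm').1, (Finset.mem_sdiff.1 hm').2⟩
  have hzero : ∀ j, j < m → μ j (z j) = 0 := by
    intro j hj
    by_contra h
    exact (hzin j hj).2 ((hFmem j (le_of_lt hj) (z j)).2 h)
  have hzpos : ∀ j, j < m → μ (j+1) (z j) ≠ 0 :=
    fun j hj => (hFmem (j+1) hj (z j)).1 (hzin j hj).1
  have hzlt : ∀ j, j < m → z j < n j := fun j hj => hnbound j hj _ (hzpos j hj)
  have hgap : ∀ j, j < m → ∀ i, z j < i → i < n j → i ∈ F j := by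
    intro j hj i h1 h2
    rw [hFmem j (le_of_lt hj)]
    intro h0
    have := hiii j hj (z j) i h1 h2 (by rw [hzero j hj]; exact Nat.zero_le _)
    rw [h0] at this
    exact hzpos j hj (Nat.le_antisymm this (Nat.zero_le _))
  have hinsert : ∀ j, j < m → F (j+1) = insert (z j) (F j) := by
    intro j hj
    rw [← Finset.sdiff_union_of_subset (hsub j hj), hzspec j hj]
    rw [Finset.insert_eq]
  have hFimg : ∀ j, j ≤ m → F j = (Finset.range j).image z := by
    intro j
    induction j with
    | zero =>
      intro _
      rw [Finset.card_eq_zero.1 (hkey 0 (Nat.zero_le m))]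
      simp
    | succ k ih =>
      intro h
      rw [hinsert k h, ih (le_of_lt h), Finset.range_add_one, Finset.image_insert]
  have hzinj : ∀ j, j < m → ∀ j', j' < j → z j' ≠ z j := by
    intro j hj j' hj' he
    apply (hzin j hj).2
    rw [hFimg j (le_of_lt hj)]
    exact Finset.mem_image.2 ⟨j', Finset.mem_range.2 hj', he⟩
  have huniq : ∀ j, j < m → ∀ i, i < n j → i ∉ F j →
      (∀ i', i < i' → i' < n j → i' ∈ F j) → i = z j := by
    intro j hj i h1 h2 h3
    rcases lt_trichotomy i (z j) with h | h | h
    · exact absurd (h3 (z j) h (hzlt j hj)) (hzin j hj).2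
    · exact h
    · exact absurd (hgap j hj i h h1) h2
  have htake : ∀ t, ∀ c' : ℕ × ℕ, c' ∈ l.take t →
      ∃ t', ∃ ht' : t' < l.length, t' < t ∧ l.get ⟨t', ht'⟩ = c' := by
    intro t c' hc'
    obtain ⟨k, hk, hke⟩ := List.mem_iff_getElem.1 hc'
    rw [List.length_take, lt_min_iff] at hk
    refine ⟨k, hk.2, hk.1, ?_⟩
    rw [List.get_eq_getElem]
    rw [← hke, List.getElem_take]
  have hgetz : ∀ t, ∀ ht : t < l.length,
      (l.get ⟨t, ht⟩).2 < m ∧ (l.get ⟨t, ht⟩).1 = z (l.get ⟨t, ht⟩).2 := by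
    intro t
    induction t using Nat.strong_induction_on with
    | _ t IH =>
    intro ht
    obtain ⟨hcm, hcn, hcr, hcc, hrows, hcols⟩ := hexec.1 t ht
    refine ⟨hcm, ?_⟩
    have hprev : ∀ c' ∈ l.take t, c'.2 < m ∧ c'.1 = z c'.2 := by
      intro c' hc'
      obtain ⟨t', ht', htt, hte⟩ := htake t c' hc'
      rw [← hte]
      exact IH t' htt ht'
    apply huniq _ hcm _ hcn
    · rw [hFimg _ (le_of_lt hcm)]
      intro hmem
      obtain ⟨j', hj', hj'e⟩ := Finset.mem_image.1 hmem
      rw [Finset.mem_range] at hj'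
      by_cases hrc : ∃ c' ∈ l.take t, c'.2 = j'
      · obtain ⟨c', hc'l, hc'2⟩ := hrc
        apply hcr
        refine ⟨c', hc'l, ?_⟩
        rw [(hprev c' hc'l).2, hc'2, hj'e]
      · have h1 := hcols j' hj' hrc
        have h2 := hzlt j' (lt_trans hj' hcm)
        omega
    · intro i' h1 h2
      obtain ⟨c', hc'l, hc'1⟩ := hrows i' h1 h2
      obtain ⟨hc'm, hc'z⟩ := hprev c' hc'l
      rw [hFimg _ (le_of_lt hcm)]
      refine Finset.mem_image.2 ⟨c'.2, Finset.mem_range.2 ?_, by rw [← hc'z, hc'1]⟩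
      rcases lt_trichotomy c'.2 (l.get ⟨t, ht⟩).2 with h | h | h
      · exact h
      · exact absurd ⟨c', hc'l, h⟩ hcc
      · exfalso
        obtain ⟨t'', ht'', htt'', hte''⟩ := htake t c' hc'l
        obtain ⟨_, _, _, _, _, hcols''⟩ := hexec.1 t'' ht''
        rw [hte''] at hcols''
        have hj : (l.get ⟨t, ht⟩).2 ∉ {j | ∃ c ∈ l.take t'', c.2 = j} := by
          rintro ⟨c3, hc3, hc3e⟩
          exact hcc ⟨c3, take_sub l (le_of_lt htt'') hc3, hc3e⟩
        have h3 := hcols'' _ h hj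
        omega
  have hmeml : ∀ c ∈ l, c.2 < m ∧ c.1 = z c.2 := by
    intro c hc
    obtain ⟨⟨t, ht⟩, rfl⟩ := List.mem_iff_get.1 hc
    exact hgetz t ht
  have hcover : ∀ j, j < m → (z j, j) ∈ l := by
    intro j hj
    have hcase : (∃ c ∈ l, c.1 = z j) ∨ (∃ c ∈ l, c.2 = j) :=
      hexec.2 (z j) j hj (hzlt j hj)
    have key : ∀ c ∈ l, (c.1 = z j ∨ c.2 = j) → c = (z j, j) := by
      intro c hcl hor
      obtain ⟨hcm, hcz⟩ := hmeml c hcl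
      have hceq : c.2 = j := by
        rcases hor with h | h
        · have hzz : z c.2 = z j := by rw [← hcz, h]
          rcases lt_trichotomy c.2 j with h' | h' | h'
          · exact absurd hzz (hzinj j hj c.2 h')
          · exact h'
          · exact absurd hzz.symm (hzinj c.2 hcm j h')
        · exact h
      have : c.1 = z j := by rw [hcz, hceq]
      exact Prod.ext this hceq
    rcases hcase with ⟨c, hcl, hc1⟩ | ⟨c, hcl, hc2⟩
    · exact key c hcl (Or.inl hc1) ▸ hcl
    · exact key c hcl (Or.inr hc2) ▸ hcl
  ext p
  obtain ⟨i, j⟩ := p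
  simp only [Set.mem_setOf_eq]
  constructor
  · intro hcin
    obtain ⟨hjm', hiz'⟩ := hmeml _ hcin
    have hjm : j < m := hjm'
    have hiz : i = z j := hiz'
    subst hiz
    exact ⟨hjm, Nat.pos_of_ne_zero (hzpos j hjm), hzero j hjm⟩
  · rintro ⟨hjm', hpos', hz0'⟩
    have hjm : j < m := hjm'
    have hpos : 0 < μ (j+1) i := hpos'
    have hz0 : μ j i = 0 := hz0'
    have hiF1 : i ∈ F (j+1) := (hFmem (j+1) hjm i).2 (Nat.pos_iff_ne_zero.1 hpos)
    have hiF0 : i ∉ F j := fun h => ((hFmem j (le_of_lt hjm) i).1 h) hz0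
    have hizj : i ∈ ({z j} : Finset ℕ) := by
      rw [← hzspec j hjm]
      exact Finset.mem_sdiff.2 ⟨hiF1, hiF0⟩
    rw [Finset.mem_singleton] at hizj
    rw [hizj]
    exact hcover j hjm
end

section
/- Fix integers 0 < n₁ ≤ n₂ ≤ … ≤ n_m. If row i of Y_n̄ contains no staircase corner (no cell (i,j) ∈ Sc_n̄), then hb(d̄)_i = 0 for every n̄-admissible composition d̄ ∈ Z_{≥0}^m. -/
/-! A serpentine step creates at most one new nonzero entry `x`, and then all later entries
`x < y < nn` of `lam` are already nonzero.  Hence, along a chain, the number of nonzero entries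
below row `i` grows only at steps `j` with `d j ≠ 0` and `i < n j`.  At the first step `j` where
entry `i` becomes nonzero, the whole interval `(i, n j)` lies in the support of `μ j`, so there
were at least `n j - i` such steps among the first `j + 1`.  On the other hand, if row `i` has no
staircase corner, every column `k` with `i < n k` has its corner in a row of `(i, n k)`, and
corners lie in distinct rows, so there are at most `n j - i - 1` such columns. -/

namespace IsSerpentine

variable {nn d : ℕ} {lam mu : ℕ → ℕ}

theorem lt_of_ne_zero (h : IsSerpentine nn d lam mu) {x : ℕ} (hx : mu x ≠ 0) : x < nn := by
  by_contra! hxn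
  exact hx (h.2.1 x hxn)

theorem d_ne_zero (h : IsSerpentine nn d lam mu) {x : ℕ} (hx : lam x = 0)
    (hx' : mu x ≠ 0) : d ≠ 0 := by
  intro hd
  have hsum := h.2.2.2.1
  rw [hd] at hsum
  have := Finset.sum_eq_zero_iff.mp hsum x (Finset.mem_range.mpr (h.lt_of_ne_zero hx'))
  omega

theorem lam_ne_zero_of_lt (h : IsSerpentine nn d lam mu) {x y : ℕ} (hx : lam x = 0)
    (hx' : mu x ≠ 0) (hxy : x < y) (hy : y < nn) : lam y ≠ 0 := by
  intro hy0
  have := h.2.2.2.2.1 x y hxy hy (by omega)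
  omega

theorem support_subset_insert (h : IsSerpentine nn d lam mu) {x : ℕ} (hx : lam x = 0)
    (hx' : mu x ≠ 0) (s : Finset ℕ) :
    s.filter (mu · ≠ 0) ⊆ insert x (s.filter (lam · ≠ 0)) := by
  intro y hy
  rw [Finset.mem_filter] at hy
  rw [Finset.mem_insert, Finset.mem_filter]
  by_cases hy0 : lam y = 0
  · left
    rcases lt_trichotomy y x with hyx | rfl | hxy
    · exact absurd hx (h.lam_ne_zero_of_lt hy0 hy.2 hyx (h.lt_of_ne_zero hx'))
    · rfl
    · exact absurd hy0 (h.lam_ne_zero_of_lt hx hx' hxy (h.lt_of_ne_zero hy.2))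
  · exact Or.inr ⟨hy.1, hy0⟩

end IsSerpentine

namespace SerpChain

variable {n : ℕ → ℕ} {m : ℕ} {d : ℕ → ℕ} {μ : ℕ → ℕ → ℕ}

theorem card_support_Ioo_le (hc : SerpChain n m d μ) (i N : ℕ) :
    ∀ j ≤ m, ((Finset.Ioo i N).filter (μ j · ≠ 0)).card ≤
      ((Finset.range j).filter (fun k => d k ≠ 0 ∧ i < n k)).card := by
  intro j
  induction j with
  | zero => simp [hc.1]
  | succ j ih =>
    intro hj
    have hstep := hc.2 j hj
    by_cases hnew : ∃ x ∈ Finset.Ioo i N, μ j x = 0 ∧ μ (j + 1) x ≠ 0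
    · obtain ⟨x, hxI, hx, hx'⟩ := hnew
      have hcol : d j ≠ 0 ∧ i < n j :=
        ⟨hstep.d_ne_zero hx hx', (Finset.mem_Ioo.mp hxI).1.trans (hstep.lt_of_ne_zero hx')⟩
      calc ((Finset.Ioo i N).filter (μ (j + 1) · ≠ 0)).card
          ≤ (insert x ((Finset.Ioo i N).filter (μ j · ≠ 0))).card :=
            Finset.card_le_card (hstep.support_subset_insert hx hx' _)
        _ ≤ ((Finset.Ioo i N).filter (μ j · ≠ 0)).card + 1 := Finset.card_insert_le _ _
        _ ≤ ((Finset.range j).filter (fun k => d k ≠ 0 ∧ i < n k)).card + 1 := by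
            grw [ih (by omega)]
        _ = ((Finset.range (j + 1)).filter (fun k => d k ≠ 0 ∧ i < n k)).card := by
            rw [Finset.range_add_one, Finset.filter_insert, if_pos hcol,
              Finset.card_insert_of_notMem (by simp)]
    · push Not at hnew
      calc ((Finset.Ioo i N).filter (μ (j + 1) · ≠ 0)).card
          ≤ ((Finset.Ioo i N).filter (μ j · ≠ 0)).card :=
            Finset.card_le_card (Finset.monotone_filter_right _ fun x hx hx' hx0 =>
              hx' (hnew x hx hx0))
        _ ≤ ((Finset.range j).filter (fun k => d k ≠ 0 ∧ i < n k)).card := ih (by omega)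
        _ ≤ ((Finset.range (j + 1)).filter (fun k => d k ≠ 0 ∧ i < n k)).card :=
            Finset.card_le_card (Finset.filter_subset_filter _ (by simp))

theorem sub_le_card_filter (hc : SerpChain n m d μ) {i j : ℕ} (hj : j < m)
    (hi : μ j i = 0) (hi' : μ (j + 1) i ≠ 0) :
    n j - i ≤ ((Finset.range (j + 1)).filter (fun k => d k ≠ 0 ∧ i < n k)).card := by
  have hstep := hc.2 j hj
  have hin : i < n j := hstep.lt_of_ne_zero hi'
  have hfull : Finset.Ioo i (n j) ⊆ (Finset.Ioo i (n j)).filter (μ j · ≠ 0) := fun x hx =>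
    Finset.mem_filter.mpr ⟨hx, hstep.lam_ne_zero_of_lt hi hi' (Finset.mem_Ioo.mp hx).1
      (Finset.mem_Ioo.mp hx).2⟩
  have hcard := (Finset.card_le_card hfull).trans (hc.card_support_Ioo_le i (n j) j hj.le)
  rw [Nat.card_Ioo] at hcard
  rw [Finset.range_add_one, Finset.filter_insert,
    if_pos ⟨hstep.d_ne_zero hi hi', hin⟩, Finset.card_insert_of_notMem (by simp)]
  omega

end SerpChain

namespace IsExec

variable {n : ℕ → ℕ} {m : ℕ} {l : List (ℕ × ℕ)}

theorem nodup_map_fst (hl : IsExec n m l) : (l.map Prod.fst).Nodup := by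
  rw [List.Nodup, List.pairwise_map, List.pairwise_iff_getElem]
  intro t t' ht ht' htt' heq
  refine (hl.1 t' ht').2.2.1 ⟨l[t], ?_, heq⟩
  exact List.mem_take_iff_getElem.mpr ⟨t, by omega, rfl⟩

variable {i : ℕ}

theorem exists_mem_snd_eq (hl : IsExec n m l) (hrow : ∀ j, (i, j) ∉ l) {k : ℕ} (hk : k < m)
    (hik : i < n k) : ∃ c ∈ l, c.2 = k := by
  refine (hl.2 i k hk hik).resolve_left ?_
  rintro ⟨⟨i', j⟩, hc, rfl⟩
  exact hrow j hc

theorem fst_mem_Ioo (hl : IsExec n m l) (hrow : ∀ j, (i, j) ∉ l) {c : ℕ × ℕ} (hc : c ∈ l)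
    (hic : i < n c.2) : c.1 ∈ Finset.Ioo i (n c.2) := by
  obtain ⟨t, ht, rfl⟩ := List.mem_iff_getElem.mp hc
  obtain ⟨-, hlt, -, -, hbelow, -⟩ := hl.1 t ht
  refine Finset.mem_Ioo.mpr ⟨?_, hlt⟩
  rcases lt_trichotomy l[t].1 i with hti | hti | hti
  · obtain ⟨⟨i', j⟩, hc', rfl⟩ := hbelow i hti hic
    exact absurd ((List.take_sublist _ _).subset hc') (hrow j)
  · exact (hrow l[t].2 (by rw [← hti]; exact hc)).elim
  · exact hti

theorem card_filter_le_card_Ioo (hl : IsExec n m l) (hrow : ∀ j, (i, j) ∉ l)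
    (hmono : ∀ j k, j ≤ k → k < m → n j ≤ n k) {j : ℕ} (hj : j < m) :
    ((Finset.range (j + 1)).filter (i < n ·)).card ≤ (Finset.Ioo i (n j)).card := by
  have hcol : ∀ k ∈ (Finset.range (j + 1)).filter (i < n ·), ∃ c ∈ l, c.2 = k := by
    intro k hk
    rw [Finset.mem_filter, Finset.mem_range] at hk
    exact hl.exists_mem_snd_eq hrow (by omega) hk.2
  choose! corner hmem hsnd using hcol
  refine Finset.card_le_card_of_injOn (fun k => (corner k).1) ?_ ?_
  · intro k hk
    have hk' := Finset.mem_filter.mp hk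
    have hmono' := hmono k j (by simpa [Nat.lt_succ_iff] using hk'.1) hj
    have := hl.fst_mem_Ioo hrow (hmem k hk) (by rw [hsnd k hk]; exact hk'.2)
    rw [hsnd k hk, Finset.mem_Ioo] at this
    exact Finset.mem_Ioo.mpr ⟨this.1, this.2.trans_le hmono'⟩
  · intro k hk k' hk' heq
    rw [← hsnd k hk, ← hsnd k' hk',
      List.inj_on_of_nodup_map hl.nodup_map_fst (hmem k hk) (hmem k' hk') heq]

end IsExec

theorem hb_vanishes_on_cornerless_rows_general (m : ℕ)
    (n : ℕ → ℕ)
    (hmono : ∀ j k, j ≤ k → k < m → n j ≤ n k)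
    (S : Set (ℕ × ℕ)) (hS : IsScSet n m S)
    (i : ℕ) (hrow : ∀ j, (i, j) ∉ S)
    (d : ℕ → ℕ)
    (μ : ℕ → ℕ → ℕ) (hchain : SerpChain n m d μ) :
    μ m i = 0 := by
  obtain ⟨l, hl, rfl⟩ := hS
  by_contra hne
  obtain ⟨j, hj, hj'⟩ := Nat.exists_not_and_succ_of_not_zero_of_exists
    (p := fun j => j ≤ m ∧ μ j i ≠ 0) (by simp [hchain.1]) ⟨m, le_rfl, hne⟩
  have hjm : j < m := hj'.1
  have hnew := hchain.sub_le_card_filter hjm (by simpa [hjm.le] using hj) hj'.2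
  have hcols := hl.card_filter_le_card_Ioo hrow hmono hjm
  have hsub : ((Finset.range (j + 1)).filter (fun k => d k ≠ 0 ∧ i < n k)).card ≤
      ((Finset.range (j + 1)).filter (i < n ·)).card :=
    Finset.card_le_card (Finset.monotone_filter_right _ fun _ _ hk => hk.2)
  rw [Nat.card_Ioo] at hcols
  have hin : i < n j := (hchain.2 j hjm).lt_of_ne_zero hj'.2
  omega

/-- Corollary 1.23.  If row `i` of `Y_n̄` contains no staircase
corner, then `hb(d̄)_i = 0` for every `n̄`-admissible composition `d̄`.  Here
`hb(d̄) = μ⁽ᵐ⁾` for the unique chain of iterated serpentines with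
`μ⁽ᵐ⁾₊ = (d₁,…,d_m)₊`. -/
theorem hb_vanishes_on_cornerless_rows (m : ℕ) (hm : 0 < m)
    (n : ℕ → ℕ) (hn0 : 0 < n 0)
    (hmono : ∀ j k, j ≤ k → k < m → n j ≤ n k)
    (S : Set (ℕ × ℕ)) (hS : IsScSet n m S)
    (i : ℕ) (hrow : ∀ j, (i, j) ∉ S)
    (d : ℕ → ℕ) (hdsupp : ∀ j, m ≤ j → d j = 0) (hadm : NAdmissible n m d)
    (μ : ℕ → ℕ → ℕ) (hchain : SerpChain n m d μ)
    (hdom : DomEq (μ m) (truncComp m d)) :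
    μ m i = 0 :=
  hb_vanishes_on_cornerless_rows_general m n hmono S hS i hrow d μ hchain
end

section
/- Fix integers 0 < n₁ ≤ n₂ ≤ … ≤ n_m. If (i,j), (i',j') ∈ Sc_n̄ and (i,j) ⪰ (i',j') (i.e. i ≥ i' and j ≤ j'), then hb(d̄)_i ≥ hb(d̄)_{i'} for every n̄-admissible composition d̄ ∈ Z_{≥0}^m. -/
theorem List.getElem_mem_take_of_lt {α : Type*} {l : List α} {t t' : ℕ} (ht' : t' < l.length)
    (htt : t < t') : l[t] ∈ l.take t' :=
  List.mem_take_iff_getElem.2 ⟨t, by omega, rfl⟩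

namespace IsSerpentine

variable {nn e : ℕ} {lam mu : ℕ → ℕ} {i j : ℕ}

theorem apply_le_apply (hs : IsSerpentine nn e lam mu) (hij : i < j) (hj : j < nn)
    (h : lam i ≤ lam j) : mu i ≤ mu j :=
  (hs.2.2.2.2.1 i j hij hj h).trans (hs.2.2.1 j)

theorem apply_eq_zero (hs : IsSerpentine nn e lam mu) (hij : i < j) (hj : j < nn)
    (hi : lam i = 0) (hj0 : lam j = 0) : mu i = 0 :=
  Nat.eq_zero_of_le_zero (hj0 ▸ hs.2.2.2.2.1 i j hij hj (by omega))

end IsSerpentine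

namespace IsExec

variable {n : ℕ → ℕ} {m : ℕ} {l : List (ℕ × ℕ)}

theorem isSCorner (hex : IsExec n m l) {t : ℕ} (ht : t < l.length) :
    IsSCorner n m {i | ∃ c ∈ l.take t, c.1 = i} {j | ∃ c ∈ l.take t, c.2 = j} l[t] :=
  hex.1 t ht

theorem fst_getElem_ne (hex : IsExec n m l) {t t' : ℕ} (ht' : t' < l.length) (htt : t < t') :
    l[t].1 ≠ l[t'].1 :=
  fun h => (hex.isSCorner ht').2.2.1 ⟨_, List.getElem_mem_take_of_lt ht' htt, h⟩

theorem snd_getElem_ne (hex : IsExec n m l) {t t' : ℕ} (ht' : t' < l.length) (htt : t < t') :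
    l[t].2 ≠ l[t'].2 :=
  fun h => (hex.isSCorner ht').2.2.2.1 ⟨_, List.getElem_mem_take_of_lt ht' htt, h⟩

theorem eq_of_fst_eq (hex : IsExec n m l) {c c' : ℕ × ℕ} (hc : c ∈ l) (hc' : c' ∈ l)
    (h : c.1 = c'.1) : c = c' := by
  obtain ⟨t, ht, rfl⟩ := List.mem_iff_getElem.1 hc
  obtain ⟨t', ht', rfl⟩ := List.mem_iff_getElem.1 hc'
  rcases lt_trichotomy t t' with htt | rfl | htt
  · exact absurd h (hex.fst_getElem_ne ht' htt)
  · rfl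
  · exact absurd h.symm (hex.fst_getElem_ne ht htt)

theorem snd_lt (hex : IsExec n m l) {c : ℕ × ℕ} (hc : c ∈ l) : c.2 < m := by
  obtain ⟨t, ht, rfl⟩ := List.mem_iff_getElem.1 hc
  exact (hex.isSCorner ht).1

theorem fst_lt (hex : IsExec n m l) {c : ℕ × ℕ} (hc : c ∈ l) : c.1 < n c.2 := by
  obtain ⟨t, ht, rfl⟩ := List.mem_iff_getElem.1 hc
  exact (hex.isSCorner ht).2.1

theorem exists_left_of_below (hex : IsExec n m l) {c : ℕ × ℕ} (hc : c ∈ l) {r : ℕ}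
    (hcr : c.1 < r) (hr : r < n c.2) : ∃ c' ∈ l, c'.1 = r ∧ c'.2 < c.2 := by
  obtain ⟨t, ht, rfl⟩ := List.mem_iff_getElem.1 hc
  obtain ⟨c', hc'take, rfl⟩ := (hex.isSCorner ht).2.2.2.2.1 r hcr hr
  obtain ⟨s, hs, rfl⟩ := List.mem_take_iff_getElem.1 hc'take
  have hst : s < t := by omega
  refine ⟨_, List.getElem_mem _, rfl, ?_⟩
  rcases lt_trichotomy l[t].2 l[s].2 with hlt | heq | hgt
  · -- column `l[t].2` was still present when `l[s]` was recorded, and reaches below row `r`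
    have hfree : l[t].2 ∉ {j | ∃ c ∈ l.take s, c.2 = j} := by
      rintro ⟨c, hc, hcol⟩
      obtain ⟨s', hs', rfl⟩ := List.mem_take_iff_getElem.1 hc
      exact hex.snd_getElem_ne ht (by omega) hcol
    have := (hex.isSCorner (by omega : s < l.length)).2.2.2.2.2 _ hlt hfree
    omega
  · exact absurd heq.symm (hex.snd_getElem_ne ht hst)
  · exact hgt

theorem exists_in_column (hex : IsExec n m l) {c : ℕ × ℕ} (hc : c ∈ l) {j : ℕ}
    (hj : j < c.2) (hcj : c.1 < n j) : ∃ c' ∈ l, c'.2 = j := by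
  obtain ⟨t, ht, rfl⟩ := List.mem_iff_getElem.1 hc
  by_contra hno
  have hfree : j ∉ {j | ∃ c ∈ l.take t, c.2 = j} :=
    fun ⟨c, hc, hcol⟩ => hno ⟨c, List.mem_of_mem_take hc, hcol⟩
  have := (hex.isSCorner ht).2.2.2.2.2 j hj hfree
  omega

theorem exists_below_in_column (hex : IsExec n m l) {j r : ℕ} (hj : j < m) (hr : r < n j)
    (hfree : ∀ c ∈ l, c.2 ≤ j → c.1 ≠ r) : ∃ c ∈ l, c.2 = j ∧ r < c.1 := by
  have hcol : ∃ c ∈ l, c.2 = j := by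
    rcases hex.2 r j hj hr with ⟨c, hc, hrow⟩ | hcol
    · rcases lt_or_ge j c.2 with hlt | hle
      · exact hex.exists_in_column hc hlt (hrow ▸ hr)
      · exact absurd hrow (hfree c hc hle)
    · exact hcol
  obtain ⟨c, hc, rfl⟩ := hcol
  refine ⟨c, hc, rfl, ?_⟩
  rcases lt_trichotomy c.1 r with hlt | heq | hgt
  · obtain ⟨c', hc', hrow, hleft⟩ := hex.exists_left_of_below hc hlt hr
    exact absurd hrow (hfree c' hc' hleft.le)
  · exact absurd heq (hfree c hc le_rfl)
  · exact hgt

end IsExec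

namespace SerpChain

variable {n : ℕ → ℕ} {m : ℕ} {d : ℕ → ℕ} {μ : ℕ → ℕ → ℕ} {l : List (ℕ × ℕ)}

theorem apply_eq_zero (hchain : SerpChain n m d μ) (hex : IsExec n m l) {j : ℕ} (hj : j ≤ m)
    {r : ℕ} (hr : ∀ c ∈ l, c.2 < j → c.1 ≠ r) : μ j r = 0 := by
  induction j generalizing r with
  | zero => exact hchain.1 r
  | succ j ih =>
    have hs := hchain.2 j hj
    by_cases hrn : n j ≤ r
    · exact hs.2.1 r hrn
    obtain ⟨c, hc, rfl, hrc⟩ :=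
      hex.exists_below_in_column hj (not_le.1 hrn) fun c hc hcj => hr c hc (by omega)
    have hr0 : μ c.2 r = 0 := ih (by omega) fun c' hc' hc'j => hr c' hc' (by omega)
    have hc0 : μ c.2 c.1 = 0 := ih (by omega) fun c' hc' hc'j hrow => by
      rw [hex.eq_of_fst_eq hc' hc hrow] at hc'j
      omega
    exact hs.apply_eq_zero hrc (hex.fst_lt hc) hr0 hc0

theorem apply_fst_le_apply_fst (hchain : SerpChain n m d μ) (hex : IsExec n m l)
    (hmono : MonotoneOn n (Set.Iio m)) {j : ℕ} (hj : j ≤ m) {c c' : ℕ × ℕ} (hc : c ∈ l)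
    (hc' : c' ∈ l) (hcol : c.2 ≤ c'.2) (hc'j : c'.2 < j) (hrow : c'.1 ≤ c.1) :
    μ j c'.1 ≤ μ j c.1 := by
  induction j with
  | zero => omega
  | succ j ih =>
    rcases hrow.eq_or_lt with heq | hlt
    · rw [heq]
    have hcn : c.1 < n j := (hex.fst_lt hc).trans_le (hmono (hex.snd_lt hc) hj (by omega))
    refine (hchain.2 j hj).apply_le_apply hlt hcn ?_
    rcases (Nat.lt_succ_iff.1 hc'j).lt_or_eq with hlt' | rfl
    · exact ih (by omega) hlt'
    · have hc'0 : μ c'.2 c'.1 = 0 := hchain.apply_eq_zero hex (by omega)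
        fun c'' hc'' hc''j hrow'' => by
          rw [hex.eq_of_fst_eq hc'' hc' hrow''] at hc''j
          omega
      exact hc'0 ▸ Nat.zero_le _

end SerpChain

theorem hb_monotone_on_staircase_corners_general (m : ℕ)
    (n : ℕ → ℕ)
    (hmono : ∀ j k, j ≤ k → k < m → n j ≤ n k)
    (S : Set (ℕ × ℕ)) (hS : IsScSet n m S)
    (i j i' j' : ℕ) (hc : (i, j) ∈ S) (hc' : (i', j') ∈ S)
    (hge : ScLE (i', j') (i, j))
    (d : ℕ → ℕ)
    (μ : ℕ → ℕ → ℕ) (hchain : SerpChain n m d μ) :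
    μ m i' ≤ μ m i := by
  obtain ⟨l, hex, rfl⟩ := hS
  exact hchain.apply_fst_le_apply_fst (c := (i, j)) (c' := (i', j')) hex
    (fun a _ b hb hab => hmono a b hab hb) le_rfl hc hc' hge.2 (hex.snd_lt hc') hge.1

/-- Lemma 1.24.  If `(i,j) ⪰ (i',j')` are staircase corners,
then `hb(d̄)_i ≥ hb(d̄)_{i'}` for every `n̄`-admissible composition `d̄`.  Here
`hb(d̄) = μ⁽ᵐ⁾` for the unique chain of iterated serpentines with
`μ⁽ᵐ⁾₊ = (d₁,…,d_m)₊`. -/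
theorem hb_monotone_on_staircase_corners (m : ℕ) (hm : 0 < m)
    (n : ℕ → ℕ) (hn0 : 0 < n 0)
    (hmono : ∀ j k, j ≤ k → k < m → n j ≤ n k)
    (S : Set (ℕ × ℕ)) (hS : IsScSet n m S)
    (i j i' j' : ℕ) (hc : (i, j) ∈ S) (hc' : (i', j') ∈ S)
    (hge : ScLE (i', j') (i, j))
    (d : ℕ → ℕ) (hdsupp : ∀ j, m ≤ j → d j = 0) (hadm : NAdmissible n m d)
    (μ : ℕ → ℕ → ℕ) (hchain : SerpChain n m d μ)
    (hdom : DomEq (μ m) (truncComp m d)) :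
    μ m i' ≤ μ m i :=
  hb_monotone_on_staircase_corners_general m n hmono S hS i j i' j' hc hc' hge d μ hchain
end

section
/- Let k be a field of characteristic zero and let k[u₁₁, u₁₂, u₂₁, u₂₂] be the polynomial ring in four variables. Define the derivations L = u₁₁ ∂/∂u₂₁ + u₁₂ ∂/∂u₂₂ and R = u₁₂ ∂/∂u₁₁ + u₂₂ ∂/∂u₂₁. Let A = (A₁₁, A₁₂, A₂₁, A₂₂) ∈ Z_{≥0}^4 and set a₁ = max(A₁₁+A₂₁, A₁₂+A₂₂), a₂ = min(A₁₁+A₂₁, A₁₂+A₂₂). Then the monomial u^A = u₁₁^{A₁₁} u₁₂^{A₁₂} u₂₁^{A₂₁} u₂₂^{A₂₂} lies in the smallest k-subspace of k[u₁₁, u₁₂, u₂₁, u₂₂] that contains the monomials u₂₁^{a₁+l} u₁₂^{a₂−l} for l = 0, 1, …, a₂ and is invariant under L and R. -/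
open MvPolynomial

/-- The generator `u_{ab}` of the polynomial ring `k[u₁₁, u₁₂, u₂₁, u₂₂]`
(0-based: `u 0 0 = u₁₁` and so on). -/
noncomputable def U (k : Type*) [Field k] (a b : Fin 2) :
    MvPolynomial (Fin 2 × Fin 2) k :=
  X (a, b)

/-- The derivation `L = u₁₁ ∂/∂u₂₁ + u₁₂ ∂/∂u₂₂` (left action of `E₁₂ ∈ gl₂`). -/
noncomputable def Lgl2 (k : Type*) [Field k]
    (p : MvPolynomial (Fin 2 × Fin 2) k) : MvPolynomial (Fin 2 × Fin 2) k :=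
  U k 0 0 * pderiv ((1 : Fin 2), (0 : Fin 2)) p + U k 0 1 * pderiv ((1 : Fin 2), (1 : Fin 2)) p

/-- The derivation `R = u₁₂ ∂/∂u₁₁ + u₂₂ ∂/∂u₂₁` (right action of `E₁₂ ∈ gl₂`). -/
noncomputable def Rgl2 (k : Type*) [Field k]
    (p : MvPolynomial (Fin 2 × Fin 2) k) : MvPolynomial (Fin 2 × Fin 2) k :=
  U k 0 1 * pderiv ((0 : Fin 2), (0 : Fin 2)) p + U k 1 1 * pderiv ((1 : Fin 2), (0 : Fin 2)) p

noncomputable def mono (k : Type*) [Field k] (i q p j : ℕ) : MvPolynomial (Fin 2 × Fin 2) k :=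
  X ((0:Fin 2),(0:Fin 2)) ^ i * X ((0:Fin 2),(1:Fin 2)) ^ q *
    X ((1:Fin 2),(0:Fin 2)) ^ p * X ((1:Fin 2),(1:Fin 2)) ^ j

section

variable {k : Type*} [Field k]

lemma pd00 (i q p j : ℕ) :
    pderiv ((0:Fin 2),(0:Fin 2)) (mono k i q p j) = (i:k) • mono k (i-1) q p j := by
  unfold mono
  simp only [Derivation.leibniz, Derivation.leibniz_pow, pderiv_X_self, smul_eq_C_mul]
  rw [pderiv_X_of_ne (by decide), pderiv_X_of_ne (by decide), pderiv_X_of_ne (by decide)]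
  simp only [smul_zero, mul_zero, zero_add, add_zero, smul_eq_mul, nsmul_eq_mul, smul_smul, mul_one]
  rw [map_natCast (C : k →+* MvPolynomial (Fin 2 × Fin 2) k)]
  ring

lemma pd01 (i q p j : ℕ) :
    pderiv ((0:Fin 2),(1:Fin 2)) (mono k i q p j) = (q:k) • mono k i (q-1) p j := by
  unfold mono
  simp only [Derivation.leibniz, Derivation.leibniz_pow, pderiv_X_self, smul_eq_C_mul]
  rw [pderiv_X_of_ne (by decide), pderiv_X_of_ne (by decide), pderiv_X_of_ne (by decide)]
  simp only [smul_zero, mul_zero, zero_add, add_zero, smul_eq_mul, nsmul_eq_mul, smul_smul, mul_one]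
  rw [map_natCast (C : k →+* MvPolynomial (Fin 2 × Fin 2) k)]
  ring

lemma pd10 (i q p j : ℕ) :
    pderiv ((1:Fin 2),(0:Fin 2)) (mono k i q p j) = (p:k) • mono k i q (p-1) j := by
  unfold mono
  simp only [Derivation.leibniz, Derivation.leibniz_pow, pderiv_X_self, smul_eq_C_mul]
  rw [pderiv_X_of_ne (by decide), pderiv_X_of_ne (by decide), pderiv_X_of_ne (by decide)]
  simp only [smul_zero, mul_zero, zero_add, add_zero, smul_eq_mul, nsmul_eq_mul, smul_smul, mul_one]
  rw [map_natCast (C : k →+* MvPolynomial (Fin 2 × Fin 2) k)]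
  ring

lemma pd11 (i q p j : ℕ) :
    pderiv ((1:Fin 2),(1:Fin 2)) (mono k i q p j) = (j:k) • mono k i q p (j-1) := by
  unfold mono
  simp only [Derivation.leibniz, Derivation.leibniz_pow, pderiv_X_self, smul_eq_C_mul]
  rw [pderiv_X_of_ne (by decide), pderiv_X_of_ne (by decide), pderiv_X_of_ne (by decide)]
  simp only [smul_zero, mul_zero, zero_add, add_zero, smul_eq_mul, nsmul_eq_mul, smul_smul, mul_one]
  rw [map_natCast (C : k →+* MvPolynomial (Fin 2 × Fin 2) k)]
  ring

lemma L_mono (i q p j : ℕ) :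
    Lgl2 k (mono k i q p j)
      = (p:k) • mono k (i+1) q (p-1) j + (j:k) • mono k i (q+1) p (j-1) := by
  unfold Lgl2 U
  rw [pd10, pd11]
  simp only [smul_eq_C_mul]
  unfold mono
  ring

lemma R_mono (i q p j : ℕ) :
    Rgl2 k (mono k i q p j)
      = (i:k) • mono k (i-1) (q+1) p j + (p:k) • mono k i q (p-1) (j+1) := by
  unfold Rgl2 U
  rw [pd00, pd10]
  simp only [smul_eq_C_mul]
  unfold mono
  ring

variable {M : Submodule k (MvPolynomial (Fin 2 × Fin 2) k)}

lemma extract0 {x : MvPolynomial (Fin 2 × Fin 2) k} {c : k} (hc : c ≠ 0)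
    (h : c • x ∈ M) : x ∈ M := by
  have h2 := M.smul_mem c⁻¹ h
  rwa [smul_smul, inv_mul_cancel₀ hc, one_smul] at h2

lemma extract1 {x y : MvPolynomial (Fin 2 × Fin 2) k} {c : k} (hc : c ≠ 0)
    (hy : y ∈ M) (h : c • x + y ∈ M) : x ∈ M := by
  refine extract0 hc ?_
  simpa using M.sub_mem h hy

lemma extract2 {x w : MvPolynomial (Fin 2 × Fin 2) k} {c c' : k} (hcc : c ≠ c')
    (h1 : c • x + w ∈ M) (h2 : w + c' • x ∈ M) : x ∈ M := by
  refine extract0 (sub_ne_zero.mpr hcc) ?_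
  have h3 := M.sub_mem h1 h2
  have e : c • x + w - (w + c' • x) = (c - c') • x := by rw [sub_smul]; abel
  rwa [e] at h3

variable [CharZero k] {a1 a2 : ℕ}

lemma base0
    (hgen : ∀ l ≤ a2, mono k 0 (a2-l) (a1+l) 0 ∈ M)
    (hL : ∀ p ∈ M, Lgl2 k p ∈ M) :
    ∀ i q p, q ≤ a2 → i + q + p = a1 + a2 → mono k i q p 0 ∈ M := by
  intro i
  induction i with
  | zero =>
    intro q p hq hs
    have h := hgen (a2 - q) (by omega)
    have e1 : a2 - (a2 - q) = q := by omega
    have e2 : a1 + (a2 - q) = p := by omega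
    rwa [e1, e2] at h
  | succ i ih =>
    intro q p hq hs
    have hs' : mono k i q (p+1) 0 ∈ M := ih q (p+1) hq (by omega)
    have h := hL _ hs'
    rw [L_mono] at h
    simp only [Nat.add_sub_cancel, Nat.cast_zero, zero_smul, add_zero] at h
    exact extract0 (Nat.cast_ne_zero.mpr (Nat.succ_ne_zero p)) h

lemma famA
    (hgen : ∀ l ≤ a2, mono k 0 (a2-l) (a1+l) 0 ∈ M)
    (hL : ∀ p ∈ M, Lgl2 k p ∈ M) (hR : ∀ p ∈ M, Rgl2 k p ∈ M) :
    ∀ j i q p, i + q + p + j = a1 + a2 → q + j ≤ a2 → mono k i q p j ∈ M := by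
  intro j
  induction j with
  | zero =>
    intro i q p hs hq
    exact base0 hgen hL i q p (by omega) (by omega)
  | succ j ih =>
    intro i q p hs hq
    have hs' : mono k i q (p+1) j ∈ M := ih i q (p+1) (by omega) (by omega)
    have h := hR _ hs'
    rw [R_mono] at h
    simp only [Nat.add_sub_cancel] at h
    rw [add_comm] at h
    refine extract1 (Nat.cast_ne_zero.mpr (Nat.succ_ne_zero p)) ?_ h
    rcases Nat.eq_zero_or_pos i with h0 | h0
    · subst h0; simp
    · exact M.smul_mem _ (ih (i-1) (q+1) (p+1) (by omega) (by omega))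

lemma famB
    (hgen : ∀ l ≤ a2, mono k 0 (a2-l) (a1+l) 0 ∈ M)
    (hL : ∀ p ∈ M, Lgl2 k p ∈ M) (hR : ∀ p ∈ M, Rgl2 k p ∈ M) :
    ∀ s p i q j, i + q + p + j = a1 + a2 → p + j ≤ a2 → q + j = s → mono k i q p j ∈ M := by
  intro s
  induction s with
  | zero =>
    intro p i q j hs hb hqj
    exact famA hgen hL hR j i q p hs (by omega)
  | succ s ihs =>
    intro p
    induction p with
    | zero =>
      intro i q j hs hb hqj
      by_cases hA : q + j ≤ a2
      · exact famA hgen hL hR j i q 0 hs hA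
      · obtain ⟨q, rfl⟩ : ∃ q', q = q' + 1 := ⟨q - 1, by omega⟩
        have hs' : mono k (i+1) q 0 j ∈ M := ihs 0 (i+1) q j (by omega) (by omega) (by omega)
        have h := hR _ hs'
        rw [R_mono] at h
        simp only [Nat.add_sub_cancel, Nat.cast_zero, zero_smul, add_zero] at h
        exact extract0 (Nat.cast_ne_zero.mpr (Nat.succ_ne_zero i)) h
    | succ p ihp =>
      intro i q j hs hb hqj
      by_cases hA : q + j ≤ a2
      · exact famA hgen hL hR j i q (p+1) hs hA
      · obtain ⟨q, rfl⟩ : ∃ q', q = q' + 1 := ⟨q - 1, by omega⟩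
        have hs' : mono k (i+1) q (p+1) j ∈ M := ihs (p+1) (i+1) q j (by omega) (by omega) (by omega)
        have h := hR _ hs'
        rw [R_mono] at h
        simp only [Nat.add_sub_cancel] at h
        refine extract1 (Nat.cast_ne_zero.mpr (Nat.succ_ne_zero i)) ?_ h
        exact M.smul_mem _ (ihp (i+1) q (j+1) (by omega) (by omega) (by omega))

lemma famC
    (hgen : ∀ l ≤ a2, mono k 0 (a2-l) (a1+l) 0 ∈ M)
    (hL : ∀ p ∈ M, Lgl2 k p ∈ M) (hR : ∀ p ∈ M, Rgl2 k p ∈ M) :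
    ∀ r n i q p j, i + q + p + j = a1 + a2 → i + q ≤ a2 → i + q = r → q + 2*j = n →
      mono k i q p j ∈ M := by
  intro r
  induction r using Nat.strong_induction_on with
  | _ r ihr =>
  intro n
  induction n using Nat.strong_induction_on with
  | _ n ihn =>
  intro i q p j hs hle hr hn
  by_cases hA : q + j ≤ a2
  · exact famA hgen hL hR j i q p hs hA
  by_cases hB : p + j ≤ a2
  · exact famB hgen hL hR (q + j) p i q j hs hB rfl
  rcases Nat.eq_zero_or_pos q with hq0 | hq1
  · subst hq0
    obtain ⟨j, rfl⟩ : ∃ j', j = j' + 1 := ⟨j - 1, by omega⟩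
    have hx : mono k i 0 (p+1) j ∈ M :=
      ihn (0 + 2*j) (by omega) i 0 (p+1) j (by omega) (by omega) (by omega) rfl
    have h := hR _ hx
    rw [R_mono] at h
    simp only [Nat.add_sub_cancel] at h
    rw [add_comm] at h
    refine extract1 (Nat.cast_ne_zero.mpr (Nat.succ_ne_zero p)) ?_ h
    rcases Nat.eq_zero_or_pos i with h0 | h0
    · subst h0; simp
    · exact M.smul_mem _
        (ihn (1 + 2*j) (by omega) (i-1) 1 (p+1) j (by omega) (by omega) (by omega) rfl)
  · obtain ⟨q, rfl⟩ : ∃ q', q = q' + 1 := ⟨q - 1, by omega⟩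
    have hs1 : mono k (i+1) q p j ∈ M :=
      ihn (q + 2*j) (by omega) (i+1) q p j (by omega) (by omega) (by omega) rfl
    have ht1 : mono k i q p (j+1) ∈ M :=
      ihr (r-1) (by omega) (q + 2*(j+1)) i q p (j+1) (by omega) (by omega) (by omega) rfl
    have h1 := hR _ hs1
    rw [R_mono] at h1
    have h2 := hL _ ht1
    rw [L_mono] at h2
    simp only [Nat.add_sub_cancel] at h1 h2
    exact extract2 (fun h => (show i + 1 ≠ j + 1 by omega) (Nat.cast_inj.mp h)) h1 h2

lemma famD
    (hgen : ∀ l ≤ a2, mono k 0 (a2-l) (a1+l) 0 ∈ M)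
    (hL : ∀ p ∈ M, Lgl2 k p ∈ M) (hR : ∀ p ∈ M, Rgl2 k p ∈ M) :
    ∀ r p i q j, i + q + p + j = a1 + a2 → i + p ≤ a2 → i + q = r → mono k i q p j ∈ M := by
  intro r
  induction r using Nat.strong_induction_on with
  | _ r ihr =>
  intro p
  induction p with
  | zero =>
    intro i q j hs hcol hr
    by_cases hC : i + q ≤ a2
    · exact famC hgen hL hR (i+q) (q+2*j) i q 0 j hs hC rfl rfl
    · obtain ⟨q, rfl⟩ : ∃ q', q = q' + 1 := ⟨q - 1, by omega⟩
      have ht : mono k i q 0 (j+1) ∈ M :=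
        ihr (r-1) (by omega) 0 i q (j+1) (by omega) (by omega) (by omega)
      have h := hL _ ht
      rw [L_mono] at h
      simp only [Nat.add_sub_cancel, Nat.cast_zero, zero_smul, zero_add] at h
      exact extract0 (Nat.cast_ne_zero.mpr (Nat.succ_ne_zero j)) h
  | succ p ihp =>
    intro i q j hs hcol hr
    by_cases hC : i + q ≤ a2
    · exact famC hgen hL hR (i+q) (q+2*j) i q (p+1) j hs hC rfl rfl
    · obtain ⟨q, rfl⟩ : ∃ q', q = q' + 1 := ⟨q - 1, by omega⟩
      have ht : mono k i q (p+1) (j+1) ∈ M :=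
        ihr (r-1) (by omega) (p+1) i q (j+1) (by omega) (by omega) (by omega)
      have h := hL _ ht
      rw [L_mono] at h
      simp only [Nat.add_sub_cancel] at h
      rw [add_comm] at h
      refine extract1 (Nat.cast_ne_zero.mpr (Nat.succ_ne_zero j)) ?_ h
      exact M.smul_mem _ (ihp (i+1) q (j+1) (by omega) (by omega) (by omega))

end

/-- Lemma 4.1, the 2×2 case of Howe duality.  With
`a₁ = max(A₁₁+A₂₁, A₁₂+A₂₂)` and `a₂ = min(A₁₁+A₂₁, A₁₂+A₂₂)`, the monomial
`u^A` lies in the smallest `k`-subspace of `k[u₁₁,u₁₂,u₂₁,u₂₂]` containing the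
monomials `u₂₁^{a₁+l} u₁₂^{a₂−l}` for `0 ≤ l ≤ a₂` and invariant under `L` and
`R`; equivalently, it lies in every such subspace. -/
theorem gl2_howe_generators (k : Type*) [Field k] [CharZero k]
    (A11 A12 A21 A22 : ℕ)
    (M : Submodule k (MvPolynomial (Fin 2 × Fin 2) k))
    (hgen : ∀ l : ℕ, l ≤ min (A11 + A21) (A12 + A22) →
      U k 1 0 ^ (max (A11 + A21) (A12 + A22) + l) *
        U k 0 1 ^ (min (A11 + A21) (A12 + A22) - l) ∈ M)
    (hL : ∀ p ∈ M, Lgl2 k p ∈ M)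
    (hR : ∀ p ∈ M, Rgl2 k p ∈ M) :
    U k 0 0 ^ A11 * U k 0 1 ^ A12 * U k 1 0 ^ A21 * U k 1 1 ^ A22 ∈ M := by
  set a1 := max (A11 + A21) (A12 + A22) with ha1
  set a2 := min (A11 + A21) (A12 + A22) with ha2
  have hgen' : ∀ l ≤ a2, mono k 0 (a2-l) (a1+l) 0 ∈ M := by
    intro l hl
    have h := hgen l hl
    have e : mono k 0 (a2-l) (a1+l) 0 = U k 1 0 ^ (a1+l) * U k 0 1 ^ (a2-l) := by
      unfold mono U; ring
    rwa [e]
  have hsum : A11 + A12 + A21 + A22 = a1 + a2 := by omega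
  show mono k A11 A12 A21 A22 ∈ M
  by_cases h1 : A12 + A22 ≤ a2
  · exact famA hgen' hL hR A22 A11 A12 A21 (by omega) h1
  by_cases h2 : A21 + A22 ≤ a2
  · exact famB hgen' hL hR (A12 + A22) A21 A11 A12 A22 (by omega) h2 rfl
  by_cases h3 : A11 + A12 ≤ a2
  · exact famC hgen' hL hR (A11+A12) (A12+2*A22) A11 A12 A21 A22 (by omega) h3 rfl rfl
  · exact famD hgen' hL hR (A11+A12) A21 A11 A12 A22 (by omega) (by omega) rfl
end

section
/- Fix integers 0 < n₁ ≤ n₂ ≤ … ≤ n_m and a field k of characteristic zero. Let k[v] be the polynomial ring in variables v_{ij}, (i,j) ∈ Y_n̄. For 1 ≤ a < b ≤ n_m define the left operator L_{ab} = Σ_j v_{aj} ∂/∂v_{bj} (sum over j with (b,j) ∈ Y_n̄), and for 1 ≤ a < b ≤ m define the right operator R_{ab} = Σ_i v_{ib} ∂/∂v_{ia} (sum over i with (i,a) ∈ Y_n̄); these are well-defined derivations of k[v]. Then the smallest k-subspace of k[v] containing the monomials v^A = Π_{(i,j)} v_{ij}^{A_{ij}} for all DL-dense arrays A on Y_n̄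 and invariant under all operators L_{ab} and R_{ab} is the whole polynomial ring k[v]. -/
/-- The cells of the Young diagram `Y_n̄`, indexing the variables `v_{ij}` of the
polynomial ring `k[v]` (the symmetric algebra of the staircase matrices). -/
abbrev YCell (n : ℕ → ℕ) (m : ℕ) : Type := {c : ℕ × ℕ // c.2 < m ∧ c.1 < n c.2}

/-- The left operator `L_{ab} = Σ_j v_{aj} ∂/∂v_{bj}` (sum over the columns `j`
containing both rows `a` and `b`; when `a < b` this means `(b,j) ∈ Y_n̄`). -/
noncomputable def Lop (k : Type*) [Field k] (n : ℕ → ℕ) (m : ℕ) (a b : ℕ)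
    (p : MvPolynomial (YCell n m) k) : MvPolynomial (YCell n m) k :=
  ∑ j ∈ (Finset.range m).attach,
    if h : a < n j.1 ∧ b < n j.1 then
      MvPolynomial.X (⟨(a, j.1), ⟨Finset.mem_range.mp j.2, h.1⟩⟩ : YCell n m) *
        MvPolynomial.pderiv (⟨(b, j.1), ⟨Finset.mem_range.mp j.2, h.2⟩⟩ : YCell n m) p
    else 0

/-- The right operator `R_{ab} = Σ_i v_{ib} ∂/∂v_{ia}` (sum over the rows `i` with
`(i,a) ∈ Y_n̄`, which lie in column `b` as well whenever `a < b`). -/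
noncomputable def Rop (k : Type*) [Field k] (n : ℕ → ℕ) (m : ℕ) (a b : ℕ)
    (p : MvPolynomial (YCell n m) k) : MvPolynomial (YCell n m) k :=
  ∑ i ∈ (Finset.range (n a)).attach,
    if h : a < m ∧ b < m ∧ i.1 < n b then
      MvPolynomial.X (⟨(i.1, b), ⟨h.2.1, h.2.2⟩⟩ : YCell n m) *
        MvPolynomial.pderiv (⟨(i.1, a), ⟨h.1, Finset.mem_range.mp i.2⟩⟩ : YCell n m) p
    else 0

/-- The monomial `v^A = Π_{(i,j) ∈ Y_n̄} v_{ij}^{A_{ij}}` attached to an array `A`. -/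
noncomputable def monArr (k : Type*) [Field k] (n : ℕ → ℕ) (m : ℕ)
    (A : ℕ × ℕ → ℕ) : MvPolynomial (YCell n m) k :=
  ∏ j ∈ (Finset.range m).attach, ∏ i ∈ (Finset.range (n j.1)).attach,
    MvPolynomial.X
      (⟨(i.1, j.1), ⟨Finset.mem_range.mp j.2, Finset.mem_range.mp i.2⟩⟩ : YCell n m)
        ^ A (i.1, j.1)

/-!
Monomials `v^B` are ordered lexicographically by the pair of weights `(Φ, Ψ)`, where a unit of
exponent in the cell `(i, j)` contributes `N * j + (N - i)` to `Φ` (with `N = n_m` bounding every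
row index) and `i * j` to `Ψ`; we show `v^B ∈ M` by well-founded induction on this order.

Moving a unit up inside a column raises `Φ` by an amount that does not depend on the column, and
moving it right inside a row raises `Φ` by an amount that does not depend on the row. Hence, if
`B` has a unit in the cell `(a, j)` and the row `b > a` meets the support of `B` only to the right
of column `j`, then `L_{ab}` applied to `v^B` with that unit moved down to `(b, j)` (smaller `Φ`)
is a nonzero multiple of `v^B` plus monomials of the same `Φ` and smaller `Ψ`. Dually for `R_{ab}`
and a column to the left. If neither reduction applies, these two closure properties force the
support of `B` onto the staircase corners. If finally `B_c > B_{c'}` for corners `c ⪯ c'`, the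
operators `R` trade units of `c` and `c'` for units at the two other corners of their rectangle
modulo monomials of smaller `Φ`, and once `c'` is exhausted a single `L` finishes; otherwise `B`
is DL-dense.
-/

open MvPolynomial Finsupp

theorem Finsupp.exists_eq_add_single {σ : Type*} {u : σ →₀ ℕ} {c : σ} (hc : u c ≠ 0) :
    ∃ v, u = v + single c 1 :=
  ⟨u - single c 1, (tsub_add_cancel_of_le (single_le_iff.mpr (Nat.one_le_iff_ne_zero.mpr hc))).symm⟩

theorem Finsupp.weight_add_single_eq {σ : Type*} (w : σ → ℕ) {u v : σ →₀ ℕ} {x y : σ}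
    (h : u + single x 1 = v + single y 1) : weight w u + w x = weight w v + w y := by
  simpa [weight_single] using congrArg (weight w) h

theorem Finsupp.weight_add_single_lt_iff {σ : Type*} (w : σ → ℕ) (u : σ →₀ ℕ) (x y : σ) :
    weight w (u + single x 1) < weight w (u + single y 1) ↔ w x < w y := by
  simp [weight_single]

theorem Submodule.mem_of_sum_mem {R M ι : Type*} [Ring R] [AddCommGroup M] [Module R M]
    {N : Submodule R M} {s : Finset ι} {f : ι → M} {i₀ : ι} (hi₀ : i₀ ∈ s)
    (hs : ∑ i ∈ s, f i ∈ N) (h : ∀ i ∈ s, i ≠ i₀ → f i ∈ N) : f i₀ ∈ N := by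
  classical
  rw [← Finset.add_sum_erase s f hi₀] at hs
  exact (add_mem_cancel_right (N.sum_mem fun i hi => h i (Finset.mem_of_mem_erase hi)
    (Finset.ne_of_mem_erase hi))).mp hs

theorem MvPolynomial.eq_top_of_monomial_one_mem {σ k : Type*} [CommSemiring k]
    {M : Submodule k (MvPolynomial σ k)} (h : ∀ u, monomial u (1 : k) ∈ M) : M = ⊤ := by
  rw [eq_top_iff, ← (basisMonomials σ k).span_eq, Submodule.span_le]
  rintro _ ⟨u, rfl⟩
  simpa [coe_basisMonomials] using h u

section
variable {σ k : Type*} [CommSemiring k]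

theorem MvPolynomial.X_mul_pderiv_monomial_add_single (u : σ →₀ ℕ) (c d : σ) :
    X d * pderiv c (monomial (u + single c 1) (1 : k)) =
      ((u c + 1 : ℕ) : k) • monomial (u + single d 1) 1 := by
  rw [pderiv_monomial, add_tsub_cancel_right, X, monomial_mul, smul_monomial]
  simp [add_comm]

theorem MvPolynomial.X_mul_pderiv_monomial_mem {M : Submodule k (MvPolynomial σ k)} {u : σ →₀ ℕ}
    {c d : σ} (h : ∀ v, u = v + single c 1 → monomial (v + single d 1) 1 ∈ M) :
    X d * pderiv c (monomial u (1 : k)) ∈ M := by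
  by_cases hc : u c = 0
  · simp [hc]
  · obtain ⟨v, rfl⟩ := exists_eq_add_single hc
    rw [X_mul_pderiv_monomial_add_single]
    exact M.smul_mem _ (h v rfl)

end

namespace IsExec

variable {n : ℕ → ℕ} {m : ℕ} {l : List (ℕ × ℕ)}

theorem mem_cell (hE : IsExec n m l) {c : ℕ × ℕ} (hc : c ∈ l) : c.2 < m ∧ c.1 < n c.2 := by
  obtain ⟨t, ht, rfl⟩ := List.mem_iff_getElem.1 hc
  exact ⟨(hE.1 t ht).1, (hE.1 t ht).2.1⟩

theorem getElem_ne (hE : IsExec n m l) {s t : ℕ} (hs : s < l.length) (ht : t < l.length)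
    (hst : s < t) : l[s].1 ≠ l[t].1 ∧ l[s].2 ≠ l[t].2 := by
  have hmem : l[s] ∈ l.take t := List.mem_take_iff_getElem.2 ⟨s, by omega, rfl⟩
  exact ⟨fun h => (hE.1 t ht).2.2.1 ⟨_, hmem, h⟩, fun h => (hE.1 t ht).2.2.2.1 ⟨_, hmem, h⟩⟩

theorem eq_of_mem (hE : IsExec n m l) {c c' : ℕ × ℕ} (hc : c ∈ l) (hc' : c' ∈ l)
    (h : c.1 = c'.1 ∨ c.2 = c'.2) : c = c' := by
  obtain ⟨s, hs, rfl⟩ := List.mem_iff_getElem.1 hc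
  obtain ⟨t, ht, rfl⟩ := List.mem_iff_getElem.1 hc'
  rcases lt_trichotomy s t with hst | rfl | hst
  · have := hE.getElem_ne hs ht hst; tauto
  · rfl
  · have := hE.getElem_ne ht hs hst; tauto

theorem le_row_of_col_lt (hE : IsExec n m l) {s : ℕ} (hs : s < l.length) {j : ℕ}
    (hj : j < l[s].2) (hfree : ∀ c ∈ l.take s, c.2 ≠ j) : n j ≤ l[s].1 :=
  (hE.1 s hs).2.2.2.2.2 j hj fun ⟨c, hc, hcj⟩ => hfree c hc hcj

theorem exists_mem_row_of_lt (hE : IsExec n m l) {c : ℕ × ℕ} (hc : c ∈ l) {b : ℕ}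
    (hcb : c.1 < b) (hb : b < n c.2) : ∃ c' ∈ l, c'.1 = b ∧ c'.2 < c.2 := by
  obtain ⟨t, ht, rfl⟩ := List.mem_iff_getElem.1 hc
  obtain ⟨x, hx, rfl⟩ := (hE.1 t ht).2.2.2.2.1 b hcb hb
  obtain ⟨s, hs, rfl⟩ := List.mem_take_iff_getElem.1 hx
  refine ⟨_, List.getElem_mem _, rfl, ?_⟩
  have hst : s < t := by omega
  refine lt_of_le_of_ne (not_lt.1 fun hlt => ?_) (hE.getElem_ne _ ht hst).2
  have := hE.le_row_of_col_lt _ hlt fun c hc hcj => by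
    obtain ⟨u, hu, rfl⟩ := List.mem_take_iff_getElem.1 hc
    exact (hE.getElem_ne _ ht (by omega)).2 hcj
  omega

theorem exists_mem_row_of_col_empty (hE : IsExec n m l) {j : ℕ} (hj : j < m)
    (hempty : ∀ c ∈ l, c.2 ≠ j) {i : ℕ} (hi : i < n j) : ∃ c ∈ l, c.1 = i ∧ c.2 < j := by
  rcases hE.2 i j hj hi with ⟨c, hc, rfl⟩ | ⟨c, hc, hcj⟩
  · refine ⟨c, hc, rfl, lt_of_le_of_ne (not_lt.1 fun hlt => ?_) (hempty c hc)⟩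
    obtain ⟨s, hs, rfl⟩ := List.mem_iff_getElem.1 hc
    have := hE.le_row_of_col_lt hs hlt fun c hc => hempty c (List.mem_of_mem_take hc)
    omega
  · exact absurd hcj (hempty c hc)

theorem mem_of_closed (hE : IsExec n m l) {P : YCell n m → Prop}
    (hrow : ∀ c, P c → ∀ b, c.1.1 < b → b < n c.1.2 → ∃ c', c'.1.1 = b ∧ c'.1.2 < c.1.2 ∧ P c')
    (hcol : ∀ c, P c → ∀ a, a < c.1.2 → c.1.1 < n a → ∃ c', c'.1.2 = a ∧ c.1.1 < c'.1.1 ∧ P c')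
    (c : YCell n m) (hc : P c) : c.1 ∈ l := by
  induction hj : c.1.2 using Nat.strong_induction_on generalizing c with
  | _ j IH =>
  obtain ⟨⟨a, j⟩, hjm, ha⟩ := c
  dsimp only at hj ⊢
  subst hj
  have hnone : ∀ x ∈ l, x.1 = a → ¬ x.2 < j := by
    intro x hx hxa hxj
    obtain ⟨c', hc'j, hac', hc'⟩ := hcol _ hc x.2 hxj (hxa ▸ (hE.mem_cell hx).2)
    have := hE.eq_of_mem hx (IH _ hxj c' hc' hc'j) (Or.inr hc'j.symm)
    subst this
    dsimp only at hac'
    omega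
  obtain ⟨x, hx, hxj⟩ : ∃ x ∈ l, x.2 = j := by
    by_contra! hempty
    obtain ⟨x, hx, hxa, hxj⟩ := hE.exists_mem_row_of_col_empty hjm hempty ha
    exact hnone x hx hxa hxj
  rcases lt_trichotomy x.1 a with hlt | heq | hgt
  · obtain ⟨x', hx', hx'a, hx'j⟩ := hE.exists_mem_row_of_lt hx hlt (hxj ▸ ha)
    exact absurd (hxj ▸ hx'j) (hnone x' hx' hx'a)
  · exact (Prod.ext heq hxj : x = (a, j)) ▸ hx
  · obtain ⟨c', hc'a, hc'j, hc'⟩ := hrow _ hc x.1 hgt (hxj ▸ (hE.mem_cell hx).2)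
    have := hE.eq_of_mem hx (IH _ hc'j c' hc' rfl) (Or.inl hc'a.symm)
    subst this
    dsimp only at hc'j
    omega

end IsExec

namespace YCell

variable {n : ℕ → ℕ} {m : ℕ}

def toArray (B : YCell n m →₀ ℕ) (c : ℕ × ℕ) : ℕ :=
  if h : c.2 < m ∧ c.1 < n c.2 then B ⟨c, h⟩ else 0

theorem monArr_toArray (k : Type*) [Field k] (B : YCell n m →₀ ℕ) :
    monArr k n m (toArray B) = monomial B 1 := by
  simp only [monArr, X_pow_eq_monomial, ← monomial_sum_one]
  refine congrArg (monomial · 1) ?_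
  ext ⟨⟨i, j⟩, hj, hi⟩
  simp only [Finset.sum_apply', single_apply, Subtype.mk.injEq, Prod.mk.injEq, toArray]
  rw [Finset.sum_eq_single_of_mem ⟨j, Finset.mem_range.2 hj⟩ (Finset.mem_attach _ _)
      fun x _ hx => Finset.sum_eq_zero fun y _ => if_neg fun h => hx (Subtype.ext h.2),
    Finset.sum_eq_single_of_mem ⟨i, Finset.mem_range.2 hi⟩ (Finset.mem_attach _ _)
      fun y _ hy => if_neg fun h => hy (Subtype.ext h.1)]
  simp [hj, hi]

theorem row_lt_of_monotone (hmono : ∀ j j', j ≤ j' → j' < m → n j ≤ n j') (c : YCell n m) :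
    c.1.1 < n (m - 1) :=
  c.2.2.trans_le (hmono _ _ (by omega) (by omega))

-- Every row index is below `n (m - 1)` (`row_lt_of_monotone`), so the subtraction never truncates.
def cellWeight (c : YCell n m) : ℕ := n (m - 1) * c.1.2 + (n (m - 1) - c.1.1)

def rowColProduct (c : YCell n m) : ℕ := c.1.1 * c.1.2

noncomputable def monomialKey (u : YCell n m →₀ ℕ) : ℕ ×ₗ ℕ :=
  toLex (weight cellWeight u, weight rowColProduct u)

variable {k : Type*} [Field k] [CharZero k] {M : Submodule k (MvPolynomial (YCell n m) k)}

theorem monomial_mem_of_Lop_mem {a b : ℕ} {u : YCell n m →₀ ℕ} {src dst : YCell n m}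
    (hsrc : src.1.1 = b) (hdst : dst.1 = (a, src.1.2))
    (hL : Lop k n m a b (monomial (u + single src 1) 1) ∈ M)
    (hother : ∀ s d : YCell n m, s.1.1 = b → d.1 = (a, s.1.2) → s.1.2 ≠ src.1.2 →
      ∀ v, u + single src 1 = v + single s 1 → monomial (v + single d 1) 1 ∈ M) :
    monomial (u + single dst 1) 1 ∈ M := by
  obtain ⟨⟨b, j₀⟩, hj₀, hb⟩ := src
  obtain ⟨⟨a, j⟩, hj, ha⟩ := dst
  simp only [Prod.mk.injEq] at hsrc hdst
  obtain ⟨rfl, rfl⟩ := hdst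
  subst hsrc
  have key := Submodule.mem_of_sum_mem (i₀ := ⟨_, Finset.mem_range.2 hj₀⟩)
    (Finset.mem_attach _ _) hL fun j _ hj => by
      split_ifs
      · exact X_mul_pderiv_monomial_mem fun v hv =>
          hother _ _ rfl rfl (fun e => hj (Subtype.ext e)) v hv
      · exact zero_mem _
  rw [dif_pos ⟨ha, hb⟩, X_mul_pderiv_monomial_add_single] at key
  exact (M.smul_mem_iff (Nat.cast_ne_zero.2 (Nat.succ_ne_zero _))).mp key

theorem monomial_mem_of_Rop_mem {a b : ℕ} {u : YCell n m →₀ ℕ} {src dst : YCell n m}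
    (hsrc : src.1.2 = a) (hdst : dst.1 = (src.1.1, b))
    (hR : Rop k n m a b (monomial (u + single src 1) 1) ∈ M)
    (hother : ∀ s d : YCell n m, s.1.2 = a → d.1 = (s.1.1, b) → s.1.1 ≠ src.1.1 →
      ∀ v, u + single src 1 = v + single s 1 → monomial (v + single d 1) 1 ∈ M) :
    monomial (u + single dst 1) 1 ∈ M := by
  obtain ⟨⟨i₀, a⟩, ha, hi₀⟩ := src
  obtain ⟨⟨i, b⟩, hb, hib⟩ := dst
  simp only [Prod.mk.injEq] at hsrc hdst
  obtain ⟨rfl, rfl⟩ := hdst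
  subst hsrc
  have key := Submodule.mem_of_sum_mem (i₀ := ⟨_, Finset.mem_range.2 hi₀⟩)
    (Finset.mem_attach _ _) hR fun i _ hi => by
      split_ifs
      · exact X_mul_pderiv_monomial_mem fun v hv =>
          hother _ _ rfl rfl (fun e => hi (Subtype.ext e)) v hv
      · exact zero_mem _
  rw [dif_pos ⟨ha, hb, hib⟩, X_mul_pderiv_monomial_add_single] at key
  exact (M.smul_mem_iff (Nat.cast_ne_zero.2 (Nat.succ_ne_zero _))).mp key

theorem monomial_mem_of_row_gap (hmono : ∀ j j', j ≤ j' → j' < m → n j ≤ n j')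
    (hL : ∀ a b : ℕ, a < b → b < n (m - 1) → ∀ p ∈ M, Lop k n m a b p ∈ M)
    {B : YCell n m →₀ ℕ} (IH : ∀ v, monomialKey v < monomialKey B → monomial v 1 ∈ M)
    {c : YCell n m} (hc : B c ≠ 0) {b : ℕ} (hcb : c.1.1 < b) (hb : b < n c.1.2)
    (hgap : ∀ c' : YCell n m, c'.1.1 = b → c'.1.2 < c.1.2 → B c' = 0) :
    monomial B 1 ∈ M := by
  obtain ⟨⟨a, j₀⟩, hj₀, ha⟩ := c
  dsimp only at hcb hb hgap
  obtain ⟨V, rfl⟩ := exists_eq_add_single hc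
  have hN : b < n (m - 1) := row_lt_of_monotone hmono ⟨(b, j₀), hj₀, hb⟩
  refine monomial_mem_of_Lop_mem (src := ⟨(b, j₀), hj₀, hb⟩) rfl rfl
    (hL _ _ hcb hN _ (IH _ ?_)) fun s d hs hd hne v hv => IH _ ?_
  · simp only [monomialKey, Prod.Lex.toLex_lt_toLex, map_add, weight_single, smul_eq_mul,
      one_mul, cellWeight]
    omega
  obtain ⟨⟨b', j⟩, hj, hb'⟩ := s
  obtain ⟨⟨a', j'⟩, hj', ha'⟩ := d
  simp only [Prod.mk.injEq] at hs hd hne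
  obtain ⟨h1, h2⟩ := hd
  subst hs a' j'
  have hsj : j₀ < j := by
    have h1 := congrArg (· ⟨(b', j), hj, hb'⟩) hv
    have h2 := hgap ⟨(b', j), hj, hb'⟩ rfl
    simp only [Finsupp.coe_add, Pi.add_apply, ne_eq, Subtype.mk.injEq, Prod.mk.injEq, hne,
      and_false, not_false_eq_true, single_eq_of_ne, add_zero, single_eq_same] at h1 h2
    omega
  have hw := weight_add_single_eq cellWeight hv
  have hψ := weight_add_single_eq rowColProduct hv
  simp only [monomialKey, Prod.Lex.toLex_lt_toLex, map_add, weight_single, smul_eq_mul,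
    one_mul, cellWeight, rowColProduct] at hw hψ ⊢
  right
  constructor
  · omega
  · nlinarith

theorem monomial_mem_of_col_gap (hmono : ∀ j j', j ≤ j' → j' < m → n j ≤ n j')
    (hR : ∀ a b : ℕ, a < b → b < m → ∀ p ∈ M, Rop k n m a b p ∈ M)
    {B : YCell n m →₀ ℕ} (IH : ∀ v, monomialKey v < monomialKey B → monomial v 1 ∈ M)
    {c : YCell n m} (hc : B c ≠ 0) {a : ℕ} (hac : a < c.1.2) (ha : c.1.1 < n a)
    (hgap : ∀ c' : YCell n m, c'.1.2 = a → c.1.1 < c'.1.1 → B c' = 0) :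
    monomial B 1 ∈ M := by
  obtain ⟨⟨i₀, b⟩, hb, hi₀⟩ := c
  dsimp only at hac ha hgap
  obtain ⟨V, rfl⟩ := exists_eq_add_single hc
  have hN : i₀ < n (m - 1) := row_lt_of_monotone hmono ⟨(i₀, b), hb, hi₀⟩
  refine monomial_mem_of_Rop_mem (src := ⟨(i₀, a), hac.trans hb, ha⟩) rfl rfl
    (hR _ _ hac hb _ (IH _ ?_)) fun s d hs hd hne v hv => IH _ ?_
  · have : n (m - 1) * a < n (m - 1) * b := Nat.mul_lt_mul_of_pos_left hac (by omega)
    simp only [monomialKey, Prod.Lex.toLex_lt_toLex, map_add, weight_single, smul_eq_mul,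
      one_mul, cellWeight]
    omega
  obtain ⟨⟨i, a'⟩, ha', hia⟩ := s
  obtain ⟨⟨i', b'⟩, hb', hib⟩ := d
  simp only [Prod.mk.injEq] at hs hd hne
  obtain ⟨h1, h2⟩ := hd
  subst hs i' b'
  have hii : i < i₀ := by
    have h1 := congrArg (· ⟨(i, a'), ha', hia⟩) hv
    have h2 := hgap ⟨(i, a'), ha', hia⟩ rfl
    simp only [Finsupp.coe_add, Pi.add_apply, ne_eq, Subtype.mk.injEq, Prod.mk.injEq, hne, and_true,
      not_false_eq_true, single_eq_of_ne, add_zero, single_eq_same, false_and] at h1 h2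
    omega
  have hw := weight_add_single_eq cellWeight hv
  have hψ := weight_add_single_eq rowColProduct hv
  have hi : i < n (m - 1) := row_lt_of_monotone hmono ⟨(i, a'), ha', hia⟩
  simp only [monomialKey, Prod.Lex.toLex_lt_toLex, map_add, weight_single, smul_eq_mul,
    one_mul, cellWeight, rowColProduct] at hw hψ ⊢
  right
  constructor
  · omega
  · nlinarith

/- Write `D r t` for the exponent in the conclusion. Moving one unit of `D (r + 1) t` from `cc` to
`p₁` and applying `R_{j'j}` gives a combination of `D (r + 1) t` and `D r (t + 1)` only, because `F`
vanishes on column `j'`; when `r = 0` the row `ρ'` carries only `p₂`, and `L_{ρρ'}` isolates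
`D 0 t` in the same way. -/
theorem monomial_mem_of_exchange (hmono : ∀ j j', j ≤ j' → j' < m → n j ≤ n j')
    (hL : ∀ a b : ℕ, a < b → b < n (m - 1) → ∀ p ∈ M, Lop k n m a b p ∈ M)
    (hR : ∀ a b : ℕ, a < b → b < m → ∀ p ∈ M, Rop k n m a b p ∈ M)
    {cc cc' p₁ p₂ : YCell n m} {ρ ρ' j j' : ℕ} (hcc : cc.1 = (ρ, j)) (hcc' : cc'.1 = (ρ', j'))
    (hp₁ : p₁.1 = (ρ, j')) (hp₂ : p₂.1 = (ρ', j)) (hρ : ρ < ρ') (hj : j' < j)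
    {F : YCell n m →₀ ℕ} (hF : ∀ c : YCell n m, c.1.1 = ρ' ∨ c.1.2 = j' → F c = 0) (r t : ℕ)
    (IH : ∀ v, weight cellWeight v < weight cellWeight (F + single cc 1 +
      r • (single cc 1 + single cc' 1) + t • (single p₁ 1 + single p₂ 1)) → monomial v 1 ∈ M) :
    monomial (F + single cc 1 + r • (single cc 1 + single cc' 1) +
      t • (single p₁ 1 + single p₂ 1)) 1 ∈ M := by
  have hN : ρ' < n (m - 1) := by simpa [hcc'] using row_lt_of_monotone hmono cc'
  have hNj : n (m - 1) * j' < n (m - 1) * j := Nat.mul_lt_mul_of_pos_left hj (by omega)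
  induction r generalizing t with
  | zero =>
    rw [zero_smul, add_zero, add_right_comm] at IH ⊢
    refine monomial_mem_of_Lop_mem (src := p₂) (by rw [hp₂]) (by rw [hcc, hp₂])
      (hL _ _ hρ hN _ (IH _ ?_)) fun s d hs hd hne v hv => absurd (congrArg (· s) hv) ?_
    · simp only [weight_add_single_lt_iff, cellWeight, hcc, hp₂]
      omega
    · have h1 : p₁ ≠ s := fun h => by rw [← h, hp₁] at hs; omega
      have h2 : p₂ ≠ s := fun h => hne (by rw [← h, hp₂])
      simp [h1, h2, hF s (Or.inl hs)]
  | succ r ih =>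
    have hQP : cellWeight cc + cellWeight cc' = cellWeight p₁ + cellWeight p₂ := by
      simp only [cellWeight, hcc, hcc', hp₁, hp₂]
      omega
    have hD : F + single cc 1 + (r + 1) • (single cc 1 + single cc' 1) +
        t • (single p₁ 1 + single p₂ 1) = (F + single cc 1 + r • (single cc 1 + single cc' 1) +
        single cc' 1 + t • (single p₁ 1 + single p₂ 1)) + single cc 1 := by
      rw [succ_nsmul]; abel
    rw [hD] at IH ⊢
    refine monomial_mem_of_Rop_mem (src := p₁) (by rw [hp₁]) (by rw [hcc, hp₁])
      (hR _ _ hj (by simpa [hcc] using cc.2.1) _ (IH _ ?_)) fun s d hs hd hne v hv => ?_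
    · simp only [weight_add_single_lt_iff, cellWeight, hcc, hp₁]
      omega
    have hs' : s = cc' := by
      by_contra h
      have h1 : cc ≠ s := fun h => by rw [← h, hcc] at hs; omega
      have h2 : p₁ ≠ s := fun h => hne (by rw [← h, hp₁])
      have h3 : p₂ ≠ s := fun h => by rw [← h, hp₂] at hs; omega
      simpa [h1, h2, h3, Ne.symm h, hF s (Or.inr hs)] using congrArg (· s) hv
    have hd' : d = p₂ := Subtype.ext (by rw [hd, hp₂, hs', hcc'])
    subst s d
    have hv' : v = F + single cc 1 + r • (single cc 1 + single cc' 1) +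
        t • (single p₁ 1 + single p₂ 1) + single p₁ 1 :=
      add_right_cancel (hv.symm.trans (by abel))
    convert ih (t + 1) fun w hw' => IH w (hw'.trans_eq ?_) using 3
    · rw [hv', succ_nsmul]
      abel
    simp only [map_add, map_nsmul, weight_single, smul_eq_mul, one_mul]
    rw [hQP]
    linarith

theorem monomial_mem_of_support_subset {l : List (ℕ × ℕ)} (hE : IsExec n m l)
    (hgen : ∀ A : ℕ × ℕ → ℕ, DLDense {c | c ∈ l} A → monArr k n m A ∈ M)
    (hmono : ∀ j j', j ≤ j' → j' < m → n j ≤ n j')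
    (hL : ∀ a b : ℕ, a < b → b < n (m - 1) → ∀ p ∈ M, Lop k n m a b p ∈ M)
    (hR : ∀ a b : ℕ, a < b → b < m → ∀ p ∈ M, Rop k n m a b p ∈ M)
    {B : YCell n m →₀ ℕ} (hsupp : ∀ c, B c ≠ 0 → c.1 ∈ l)
    (IH : ∀ v, weight cellWeight v < weight cellWeight B → monomial v 1 ∈ M) :
    monomial B 1 ∈ M := by
  by_cases hdense : ∀ c c' : YCell n m, c.1 ∈ l → c'.1 ∈ l → ScLE c.1 c'.1 → B c ≤ B c'
  · rw [← monArr_toArray]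
    refine hgen _ ⟨fun c hc => ?_, fun c c' hc hc' hle => ?_⟩
    · unfold toArray
      split_ifs with h
      · exact not_not.1 (mt (hsupp ⟨c, h⟩) hc)
      · rfl
    · simp only [toArray, dif_pos (hE.mem_cell hc), dif_pos (hE.mem_cell hc')]
      exact hdense ⟨c, _⟩ ⟨c', _⟩ hc hc' hle
  push Not at hdense
  obtain ⟨⟨⟨ρ, j⟩, hj, hρ⟩, ⟨⟨ρ', j'⟩, hj', hρ'⟩, hc, hc', ⟨hρρ', hjj'⟩, hlt⟩ := hdense
  dsimp only at hc hc' hρρ' hjj' hρ hρ'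
  set c : YCell n m := ⟨(ρ, j), hj, hρ⟩
  set c' : YCell n m := ⟨(ρ', j'), hj', hρ'⟩
  have hne : c ≠ c' := fun h => by rw [h] at hlt; omega
  have hρ₁ : ρ < ρ' := lt_of_le_of_ne hρρ' fun h =>
    hne (Subtype.ext (hE.eq_of_mem hc hc' (Or.inl h)))
  have hj₁ : j' < j := lt_of_le_of_ne hjj' fun h =>
    hne (Subtype.ext (hE.eq_of_mem hc hc' (Or.inr h.symm)))
  set F := B - single c (B c' + 1) - single c' (B c')
  set p₁ : YCell n m := ⟨(ρ, j'), hj', hρ₁.trans hρ'⟩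
  set p₂ : YCell n m := ⟨(ρ', j), hj, hρ'.trans_le (hmono _ _ hjj' hj)⟩
  have hB : B = F + single c 1 + B c' • (single c 1 + single c' 1) +
      0 • (single p₁ 1 + single p₂ 1) := by
    ext x
    by_cases hxc : c = x
    · subst hxc
      simp only [F, zero_smul, add_zero, Finsupp.coe_add, coe_tsub, Finsupp.coe_smul, Pi.add_apply,
        Pi.sub_apply, Pi.smul_apply, smul_eq_mul, single_eq_same, single_eq_of_ne hne, mul_one,
        tsub_zero]
      omega
    by_cases hxc' : c' = x
    · subst hxc'
      simp [F, Ne.symm hne]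
    simp [F, hxc, hxc']
  have hF : ∀ x : YCell n m, x.1.1 = ρ' ∨ x.1.2 = j' → F x = 0 := by
    intro x hx
    by_cases hxc' : x = c'
    · simp [F, hxc', hne]
    · have : B x = 0 := by
        by_contra h
        exact hxc' (Subtype.ext (hE.eq_of_mem (hsupp x h) hc' hx))
      simp [F, this]
  rw [hB] at IH ⊢
  exact monomial_mem_of_exchange hmono hL hR (cc := c) (cc' := c') (p₁ := p₁) (p₂ := p₂)
    rfl rfl rfl rfl hρ₁ hj₁ hF _ _ IH

theorem monomial_mem {l : List (ℕ × ℕ)} (hE : IsExec n m l)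
    (hgen : ∀ A : ℕ × ℕ → ℕ, DLDense {c | c ∈ l} A → monArr k n m A ∈ M)
    (hmono : ∀ j j', j ≤ j' → j' < m → n j ≤ n j')
    (hL : ∀ a b : ℕ, a < b → b < n (m - 1) → ∀ p ∈ M, Lop k n m a b p ∈ M)
    (hR : ∀ a b : ℕ, a < b → b < m → ∀ p ∈ M, Rop k n m a b p ∈ M)
    (B : YCell n m →₀ ℕ) : monomial B 1 ∈ M := by
  induction B using (InvImage.wf monomialKey wellFounded_lt).induction with
  | _ B IH =>
  by_cases hrow : ∃ c, B c ≠ 0 ∧ ∃ b, c.1.1 < b ∧ b < n c.1.2 ∧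
      ∀ c' : YCell n m, c'.1.1 = b → c'.1.2 < c.1.2 → B c' = 0
  · obtain ⟨c, hc, b, hcb, hb, hgap⟩ := hrow
    exact monomial_mem_of_row_gap hmono hL IH hc hcb hb hgap
  by_cases hcol : ∃ c, B c ≠ 0 ∧ ∃ a, a < c.1.2 ∧ c.1.1 < n a ∧
      ∀ c' : YCell n m, c'.1.2 = a → c.1.1 < c'.1.1 → B c' = 0
  · obtain ⟨c, hc, a, hac, ha, hgap⟩ := hcol
    exact monomial_mem_of_col_gap hmono hR IH hc hac ha hgap
  push Not at hrow hcol
  exact monomial_mem_of_support_subset hE hgen hmono hL hR (hE.mem_of_closed hrow hcol)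
    fun v hv => IH v (Prod.Lex.toLex_lt_toLex.2 (Or.inl hv))

end YCell

theorem dl_dense_monomials_generate_general (k : Type*) [Field k] [CharZero k]
    (m : ℕ) (n : ℕ → ℕ)
    (hmono : ∀ j j', j ≤ j' → j' < m → n j ≤ n j')
    (S : Set (ℕ × ℕ)) (hS : IsScSet n m S)
    (M : Submodule k (MvPolynomial (YCell n m) k))
    (hgen : ∀ A : ℕ × ℕ → ℕ, DLDense S A → monArr k n m A ∈ M)
    (hL : ∀ a b : ℕ, a < b → b < n (m - 1) → ∀ p ∈ M, Lop k n m a b p ∈ M)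
    (hR : ∀ a b : ℕ, a < b → b < m → ∀ p ∈ M, Rop k n m a b p ∈ M) :
    M = ⊤ := by
  obtain ⟨l, hE, rfl⟩ := hS
  exact eq_top_of_monomial_one_mem (YCell.monomial_mem hE hgen hmono hL hR)

/-- Proposition 4.4.  The monomials `v^A`, `A` a DL-dense array,
generate `k[v]` as a bi-module over the two Borel subalgebras: the smallest
`k`-subspace containing them and invariant under all operators `L_{ab}`
(`a < b ≤ n_m`) and `R_{ab}` (`a < b ≤ m`) is the whole polynomial ring. -/
theorem dl_dense_monomials_generate (k : Type*) [Field k] [CharZero k]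
    (m : ℕ) (hm : 0 < m) (n : ℕ → ℕ) (hn0 : 0 < n 0)
    (hmono : ∀ j j', j ≤ j' → j' < m → n j ≤ n j')
    (S : Set (ℕ × ℕ)) (hS : IsScSet n m S)
    (M : Submodule k (MvPolynomial (YCell n m) k))
    (hgen : ∀ A : ℕ × ℕ → ℕ, DLDense S A → monArr k n m A ∈ M)
    (hL : ∀ a b : ℕ, a < b → b < n (m - 1) → ∀ p ∈ M, Lop k n m a b p ∈ M)
    (hR : ∀ a b : ℕ, a < b → b < m → ∀ p ∈ M, Rop k n m a b p ∈ M) :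
    M = ⊤ :=
  dl_dense_monomials_generate_general k m n hmono S hS M hgen hL hR
end

section
/- Fix integers 0 < n₁ ≤ n₂ ≤ … ≤ n_m and a field k of characteristic zero, and let k[v], L_{ab}, R_{ab} and v^A be as follows: k[v] is the polynomial ring in variables v_{ij}, (i,j) ∈ Y_n̄; L_{ab} = Σ_j v_{aj} ∂/∂v_{bj} for 1 ≤ a < b ≤ n_m; R_{ab} = Σ_i v_{ib} ∂/∂v_{ia} for 1 ≤ a < b ≤ m; v^A = Π_{(i,j)} v_{ij}^{A_{ij}}. Let A : Y_n̄ → Z_{≥0} be an array with A_{ij} = 0 unless (i,j) ∈ Sc_n̄, and let λ be the partition obtained by sorting the multiset of values {A_s : s ∈ Sc_n̄} in non-increasing order. Then v^A lies in the smallest k-subspace of k[v] that contains all monomials v^B for B ∈ DL_n̄(μ) over all partitions μ with μ ≥ λ in the dominance order (|μ| = |λ|) and is invariant under all operators L_{ab} and R_{ab}. -/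
/-!
Straightening. If an array `B` supported on the staircase corners is not DL-dense, two corners
`c = (i, j) ⪯ c' = (i', j')` (so `i < i'`, `j' < j`) carry values `p = B c > q = B c'`. Replacing
`(p, q)` by `(α, p + q - α)` with `α ≤ q` raises the row-sum vector in the dominance order and
strictly raises the row moment `∑ r * hor r`, which is bounded; so by induction these arrays lie
in `M`. On the rectangle with corners `x = v_c`, `y = v_c'`, `u = v_(i,j')`, `w = v_(i',j)`, the
operators `R_{j'j}` and `L_{ii'}` are derivations sending `y ↦ w` and `y ↦ u, w ↦ x` and killing
the rest of the monomial `g`. Hence, for `r = p - α`, `L^r R^r (g x^α y^(p+q-α))` is a nonzero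
multiple of `∑ t, r.descFactorial t • v t` with `v 0 = g x^p y^q`, and Lagrange interpolation at
the `q + 1` nodes `r` isolates `v 0`.
-/

open Finset

namespace Derivation

variable {R A : Type*} [CommSemiring R] [CommSemiring A] [Algebra R A] (D : Derivation R A A)

theorem iterate_map_mul (n : ℕ) (a b : A) :
    D^[n] (a * b) = ∑ ij ∈ antidiagonal n, n.choose ij.1 • (D^[ij.1] a * D^[ij.2] b) := by
  induction n with
  | zero => simp
  | succ n ih =>
    rw [sum_antidiagonal_choose_succ_nsmul (fun i j => D^[i] a * D^[j] b) n]
    simp only [Function.iterate_succ_apply', ih, map_sum, map_nsmul, leibniz, smul_eq_mul,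
      nsmul_add, sum_add_distrib]
    refine congrArg _ (sum_congr rfl fun ⟨i, j⟩ hij => ?_)
    rw [n.choose_symm_of_eq_add (mem_antidiagonal.1 hij).symm, mul_comm]

theorem iterate_map_mul_of_map_eq_zero {c : A} (hc : D c = 0) (n : ℕ) (a : A) :
    D^[n] (c * a) = c * D^[n] a := by
  induction n with
  | zero => rfl
  | succ n ih => simp [Function.iterate_succ_apply', ih, leibniz, hc]

theorem iterate_map_pow {a b : A} (hab : D a = b) (hb : D b = 0) (N t : ℕ) :
    D^[t] (a ^ N) = N.descFactorial t • (a ^ (N - t) * b ^ t) := by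
  induction t with
  | zero => simp
  | succ t ih =>
    rw [Function.iterate_succ_apply', ih, map_nsmul, leibniz, leibniz_pow, leibniz_pow, hb, hab,
      Nat.descFactorial_succ]
    simp only [smul_eq_mul]
    rw [show N - (t + 1) = N - t - 1 by omega, pow_succ]
    simp only [nsmul_eq_mul, Nat.cast_mul]
    ring

variable {D E : Derivation R A A} {g u w x y : A}

theorem iterate_map_pow_mul_pow (hEx : E x = 0) (hEu : E u = 0) (hEy : E y = u)
    (hEw : E w = x) (q r : ℕ) :
    E^[r] (y ^ q * w ^ r) = ∑ ij ∈ antidiagonal r,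
      (r.choose ij.1 * q.descFactorial ij.1 * r.descFactorial ij.2) •
        (u ^ ij.1 * w ^ ij.1 * x ^ ij.2 * y ^ (q - ij.1)) := by
  rw [E.iterate_map_mul]
  refine sum_congr rfl fun ⟨i, j⟩ hij => ?_
  rw [E.iterate_map_pow hEy hEu, E.iterate_map_pow hEw hEx,
    show r - j = i by have := HasAntidiagonal.mem_antidiagonal.1 hij; omega]
  simp only [mul_smul, nsmul_eq_mul]
  ring

theorem iterate_iterate_map_mul_pow_mul_pow (hDg : D g = 0) (hDx : D x = 0) (hDy : D y = w)
    (hDw : D w = 0) (hEg : E g = 0) (hEx : E x = 0) (hEu : E u = 0) (hEy : E y = u) (hEw : E w = x)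
    (α q r : ℕ) :
    E^[r] (D^[r] (g * x ^ α * y ^ (q + r))) = ∑ ij ∈ antidiagonal r,
      ((q + r).descFactorial r * (r.choose ij.1 * q.descFactorial ij.1 * r.descFactorial ij.2)) •
        (g * u ^ ij.1 * w ^ ij.1 * x ^ (α + ij.2) * y ^ (q - ij.1)) := by
  have hD : D (g * x ^ α) = 0 := by simp [hDg, hDx]
  have hE : E ((q + r).descFactorial r • (g * x ^ α)) = 0 := by simp [hEg, hEx]
  rw [D.iterate_map_mul_of_map_eq_zero hD, D.iterate_map_pow hDy hDw,
    Nat.add_sub_cancel, mul_smul_comm, ← smul_mul_assoc, E.iterate_map_mul_of_map_eq_zero hE,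
    iterate_map_pow_mul_pow hEx hEu hEy hEw, mul_sum]
  refine sum_congr rfl fun ij _ => ?_
  simp only [mul_smul, nsmul_eq_mul, pow_add]
  ring

end Derivation

/-- The nodes `p - α` (`α ≤ q`) are distinct, so Lagrange interpolation expresses the value at `0`
of `descPochhammer k t` (`t ≤ q`), which is `1` or `0` according as `t = 0` or not, as one fixed
combination of its values `(p - α).descFactorial t` at the nodes. -/
theorem Submodule.mem_of_forall_sum_descFactorial_smul_mem {k V : Type*} [Field k] [CharZero k]
    [AddCommGroup V] [Module k V] {M : Submodule k V} {p q : ℕ} (hqp : q ≤ p) (v : ℕ → V)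
    (h : ∀ α ≤ q, ∑ t ∈ range (q + 1), ((p - α).descFactorial t : k) • v t ∈ M) : v 0 ∈ M := by
  set node : ℕ → k := fun α => ((p - α : ℕ) : k)
  have hinj : Set.InjOn node (range (q + 1)) := fun α hα β hβ hαβ => by
    simp only [coe_range, Set.mem_Iio, node, Nat.cast_inj] at hα hβ hαβ
    omega
  have hdual : ∀ t ∈ range (q + 1), ∑ α ∈ range (q + 1),
      (Lagrange.basis (range (q + 1)) node α).eval 0 * ((p - α).descFactorial t : k) =
        if t = 0 then 1 else 0 := by
    intro t ht
    have hdeg : (descPochhammer k t).degree < #(range (q + 1)) := by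
      rw [Polynomial.degree_eq_natDegree (monic_descPochhammer k t).ne_zero]
      simp only [descPochhammer_natDegree, card_range, Nat.cast_lt]
      exact mem_range.mp ht
    have := congrArg (Polynomial.eval 0) (Lagrange.eq_interpolate hinj hdeg)
    rw [descPochhammer_eval_zero, Lagrange.interpolate_apply, Polynomial.eval_finsetSum] at this
    rw [this]
    refine sum_congr rfl fun α _ => ?_
    simp [node, descPochhammer_eval_eq_descFactorial, mul_comm]
  have hv : v 0 = ∑ α ∈ range (q + 1), (Lagrange.basis (range (q + 1)) node α).eval 0 •
      ∑ t ∈ range (q + 1), ((p - α).descFactorial t : k) • v t := by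
    simp only [smul_sum, smul_smul]
    rw [sum_comm]
    simp only [← sum_smul]
    rw [sum_congr rfl fun t ht => by rw [hdual t ht]]
    simp
  rw [hv]
  exact sum_mem fun α hα => M.smul_mem _ (h α (by simpa [Nat.lt_succ_iff] using hα))

theorem Submodule.mul_pow_mul_pow_mem_of_derivations {k A : Type*} [Field k] [CharZero k]
    [CommRing A] [Algebra k A] {D E : Derivation k A A} {g u w x y : A}
    (hDg : D g = 0) (hDx : D x = 0) (hDy : D y = w) (hDw : D w = 0)
    (hEg : E g = 0) (hEx : E x = 0) (hEu : E u = 0) (hEy : E y = u) (hEw : E w = x)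
    {M : Submodule k A} (hDM : Set.MapsTo D M M) (hEM : Set.MapsTo E M M) {p q : ℕ}
    (hqp : q ≤ p) (hgen : ∀ α ≤ q, g * x ^ α * y ^ (p + q - α) ∈ M) :
    g * x ^ p * y ^ q ∈ M := by
  -- The weight `1 / t! ^ 2` absorbs `r.choose t * r.descFactorial (r - t) * t! ^ 2 =
  -- r! * r.descFactorial t` in the expansion of `E^[r] (D^[r] _)`.
  set v : ℕ → A := fun t => ((q.descFactorial t : k) / (t.factorial : k) ^ 2) •
    (g * u ^ t * w ^ t * x ^ (p - t) * y ^ (q - t))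
  have hv0 : v 0 = g * x ^ p * y ^ q := by simp [v]
  rw [← hv0]
  refine mem_of_forall_sum_descFactorial_smul_mem hqp v fun α hα => ?_
  set r := p - α
  have hc : (((q + r).descFactorial r * r.factorial : ℕ) : k) ≠ 0 := by
    rw [Nat.cast_ne_zero]
    exact Nat.mul_ne_zero (Nat.descFactorial_pos.mpr (by omega)).ne' (Nat.factorial_ne_zero r)
  have hmem : E^[r] (D^[r] (g * x ^ α * y ^ (q + r))) ∈ M :=
    hEM.iterate r (hDM.iterate r (by rw [show q + r = p + q - α by omega]; exact hgen α hα))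
  rw [Derivation.iterate_iterate_map_mul_pow_mul_pow hDg hDx hDy hDw hEg hEx hEu hEy hEw,
    Nat.sum_antidiagonal_eq_sum_range_succ_mk] at hmem
  refine (M.smul_mem_iff hc).mp ?_
  convert hmem using 1
  rw [smul_sum]
  refine sum_congr_of_eq_on_inter (fun t _ ht => ?_) (fun t _ ht => ?_) (fun t _ htr => ?_)
  · rw [Nat.descFactorial_eq_zero_iff_lt.mpr (show r < t by simpa using ht)]
    simp
  · rw [Nat.descFactorial_eq_zero_iff_lt.mpr (show q < t by simpa using ht)]
    simp
  · have htr : t ≤ r := by simpa [Nat.lt_succ_iff] using htr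
    have hchoose : (r.choose t * r.descFactorial (r - t) : k) * (t.factorial : k) ^ 2 =
        r.factorial * r.descFactorial t := by
      have h1 := Nat.descFactorial_eq_factorial_mul_choose r t
      have h2 := Nat.factorial_mul_descFactorial (Nat.sub_le r t)
      rw [Nat.sub_sub_self htr] at h2
      rw [← Nat.cast_mul, ← Nat.cast_mul, ← Nat.cast_pow, ← Nat.cast_mul, h1, ← h2]
      ring_nf
    have ht0 : (t.factorial : k) ≠ 0 := Nat.cast_ne_zero.mpr (Nat.factorial_ne_zero t)
    simp only [v, smul_smul, ← Nat.cast_smul_eq_nsmul k]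
    rw [show α + (r - t) = p - t by omega]
    congr 1
    field_simp
    push_cast
    linear_combination -(q + r).descFactorial r * q.descFactorial t * hchoose

open MvPolynomial

section Operators

variable (k : Type*) [Field k] (n : ℕ → ℕ) (m : ℕ)

noncomputable def lopDerivation (a b : ℕ) :
    Derivation k (MvPolynomial (YCell n m) k) (MvPolynomial (YCell n m) k) :=
  ∑ j ∈ (range m).attach,
    if h : a < n j.1 ∧ b < n j.1 then
      (X (⟨(a, j.1), ⟨mem_range.mp j.2, h.1⟩⟩ : YCell n m) : MvPolynomial (YCell n m) k) •
        pderiv (⟨(b, j.1), ⟨mem_range.mp j.2, h.2⟩⟩ : YCell n m)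
    else 0

noncomputable def ropDerivation (a b : ℕ) :
    Derivation k (MvPolynomial (YCell n m) k) (MvPolynomial (YCell n m) k) :=
  ∑ i ∈ (range (n a)).attach,
    if h : a < m ∧ b < m ∧ i.1 < n b then
      (X (⟨(i.1, b), ⟨h.2.1, h.2.2⟩⟩ : YCell n m) : MvPolynomial (YCell n m) k) •
        pderiv (⟨(i.1, a), ⟨h.1, mem_range.mp i.2⟩⟩ : YCell n m)
    else 0

variable {k n m}

@[simp]
theorem coe_lopDerivation (a b : ℕ) : ⇑(lopDerivation k n m a b) = Lop k n m a b := by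
  funext p
  rw [lopDerivation, Lop, ← Derivation.coeFnAddMonoidHom_apply (R := k), map_sum,
    Finset.sum_apply]
  refine sum_congr rfl fun j _ => ?_
  split_ifs <;> rfl

@[simp]
theorem coe_ropDerivation (a b : ℕ) : ⇑(ropDerivation k n m a b) = Rop k n m a b := by
  funext p
  rw [ropDerivation, Rop, ← Derivation.coeFnAddMonoidHom_apply (R := k), map_sum,
    Finset.sum_apply]
  refine sum_congr rfl fun i _ => ?_
  split_ifs <;> rfl

theorem Lop_X_of_fst_ne {a b : ℕ} {c : YCell n m} (h : c.1.1 ≠ b) : Lop k n m a b (X c) = 0 := by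
  refine sum_eq_zero fun j _ => ?_
  split_ifs
  · rw [pderiv_X, Pi.single_apply, if_neg fun hc => h (by rw [hc])]
    simp
  · rfl

theorem Lop_X {a b j : ℕ} (hj : j < m) (ha : a < n j) (hb : b < n j) :
    Lop k n m a b (X ⟨(b, j), hj, hb⟩) = X ⟨(a, j), hj, ha⟩ := by
  rw [Lop, sum_eq_single ⟨j, mem_range.mpr hj⟩]
  · simp [dif_pos (And.intro ha hb)]
  · intro j' _ hj'
    split_ifs
    · rw [pderiv_X, Pi.single_apply, if_neg fun hc => hj' (Subtype.ext (by simpa using hc.symm))]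
      simp
    · rfl
  · simp

theorem Rop_X_of_snd_ne {a b : ℕ} {c : YCell n m} (h : c.1.2 ≠ a) : Rop k n m a b (X c) = 0 := by
  refine sum_eq_zero fun i _ => ?_
  split_ifs
  · rw [pderiv_X, Pi.single_apply, if_neg fun hc => h (by rw [hc])]
    simp
  · rfl

theorem Rop_X {a b i : ℕ} (ha : a < m) (hb : b < m) (hia : i < n a) (hib : i < n b) :
    Rop k n m a b (X ⟨(i, a), ha, hia⟩) = X ⟨(i, b), hb, hib⟩ := by
  rw [Rop, sum_eq_single ⟨i, mem_range.mpr hia⟩]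
  · simp [dif_pos (And.intro ha (And.intro hb hib))]
  · intro i' _ hi'
    split_ifs
    · rw [pderiv_X, Pi.single_apply, if_neg fun hc => hi' (Subtype.ext (by simpa using hc.symm))]
      simp
    · rfl
  · simp

end Operators

section Monomials

variable {k : Type*} [Field k] {n : ℕ → ℕ} {m : ℕ}

theorem monArr_add (A B : ℕ × ℕ → ℕ) :
    monArr k n m (A + B) = monArr k n m A * monArr k n m B := by
  simp only [monArr, Pi.add_apply, pow_add, prod_mul_distrib]

theorem monArr_single {c : ℕ × ℕ} (hc : c.2 < m ∧ c.1 < n c.2) (v : ℕ) :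
    monArr k n m (Pi.single c v) = X ⟨c, hc⟩ ^ v := by
  obtain ⟨i, j⟩ := c
  rw [monArr, prod_eq_single ⟨j, mem_range.mpr hc.1⟩,
    prod_eq_single ⟨i, mem_range.mpr hc.2⟩]
  · simp
  · intro i' _ hi'
    rw [Pi.single_apply, if_neg fun h => hi' (Subtype.ext (by simpa using h)), pow_zero]
  · simp
  · intro j' _ hj'
    refine prod_eq_one fun i' _ => ?_
    rw [Pi.single_apply, if_neg fun h => hj' (Subtype.ext (Prod.ext_iff.mp h).2), pow_zero]
  · simp

theorem monArr_update {A : ℕ × ℕ → ℕ} {c : ℕ × ℕ} (hc : c.2 < m ∧ c.1 < n c.2) (hAc : A c = 0)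
    (v : ℕ) : monArr k n m (Function.update A c v) = monArr k n m A * X ⟨c, hc⟩ ^ v := by
  rw [← monArr_single hc, ← monArr_add]
  congr 1
  funext z
  rcases eq_or_ne z c with rfl | hz
  · simp [hAc]
  · simp [hz]

theorem map_monArr_eq_zero
    (D : Derivation k (MvPolynomial (YCell n m) k) (MvPolynomial (YCell n m) k))
    {A : ℕ × ℕ → ℕ} (hD : ∀ c : YCell n m, A c.1 ≠ 0 → D (X c) = 0) :
    D (monArr k n m A) = 0 := by
  have hmul : ∀ f g : MvPolynomial (YCell n m) k, D f = 0 → D g = 0 → D (f * g) = 0 :=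
    fun f g hf hg => by simp [hf, hg]
  refine prod_induction _ (D · = 0) hmul D.map_one_eq_zero fun j _ =>
    prod_induction _ (D · = 0) hmul D.map_one_eq_zero fun i _ => ?_
  by_cases hA : A (i.1, j.1) = 0
  · simp [hA]
  · simp [D.leibniz_pow, hD ⟨_, _⟩ hA]

end Monomials

theorem monArr_update_update_mem {k : Type*} [Field k] [CharZero k] {n : ℕ → ℕ} {m : ℕ}
    (hmono : ∀ j j', j ≤ j' → j' < m → n j ≤ n j') {B : ℕ × ℕ → ℕ} {i j i' j' : ℕ}
    (hi : i < i') (hj : j' < j) (hjm : j < m) (hi' : i' < n j') (hB : B (i, j) = 0)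
    (hrow : ∀ j, B (i', j) = 0) (hcol : ∀ i, B (i, j') = 0)
    {M : Submodule k (MvPolynomial (YCell n m) k)} (hL : Set.MapsTo (Lop k n m i i') M M)
    (hR : Set.MapsTo (Rop k n m j' j) M M) {p q : ℕ} (hqp : q ≤ p)
    (hgen : ∀ α ≤ q,
      monArr k n m (Function.update (Function.update B (i, j) α) (i', j') (p + q - α)) ∈ M) :
    monArr k n m (Function.update (Function.update B (i, j) p) (i', j') q) ∈ M := by
  have hnj : n j' ≤ n j := hmono j' j hj.le hjm
  have hx : j < m ∧ i < n j := ⟨hjm, by omega⟩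
  have hy : j' < m ∧ i' < n j' := ⟨by omega, hi'⟩
  have hu : j' < m ∧ i < n j' := ⟨hy.1, by omega⟩
  have hw : j < m ∧ i' < n j := ⟨hjm, by omega⟩
  have hmon : ∀ a b, monArr k n m (Function.update (Function.update B (i, j) a) (i', j') b) =
      monArr k n m B * X ⟨(i, j), hx⟩ ^ a * X ⟨(i', j'), hy⟩ ^ b := fun a b => by
    rw [monArr_update hy (by simp [hi.ne', hrow]), monArr_update hx hB]
  simp only [hmon] at hgen ⊢
  have hDg : ropDerivation k n m j' j (monArr k n m B) = 0 :=
    map_monArr_eq_zero _ fun ⟨⟨a, b⟩, _⟩ hc => by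
      simpa using Rop_X_of_snd_ne fun (h : b = j') => hc (h ▸ hcol a)
  have hEg : lopDerivation k n m i i' (monArr k n m B) = 0 :=
    map_monArr_eq_zero _ fun ⟨⟨a, b⟩, _⟩ hc => by
      simpa using Lop_X_of_fst_ne fun (h : a = i') => hc (h ▸ hrow b)
  have key := Submodule.mul_pow_mul_pow_mem_of_derivations (D := ropDerivation k n m j' j)
    (E := lopDerivation k n m i i') (M := M) (g := monArr k n m B) (x := X ⟨(i, j), hx⟩)
    (y := X ⟨(i', j'), hy⟩) (u := X ⟨(i, j'), hu⟩) (w := X ⟨(i', j), hw⟩)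
  simp only [coe_ropDerivation, coe_lopDerivation] at key hDg hEg
  exact key hDg (Rop_X_of_snd_ne hj.ne') (Rop_X hy.1 hjm hi' hw.2) (Rop_X_of_snd_ne hj.ne')
    hEg (Lop_X_of_fst_ne hi.ne) (Lop_X_of_fst_ne hi.ne) (Lop_X hy.1 hu.2 hi')
    (Lop_X hjm hx.2 hw.2) hR hL hqp hgen

section Dominance

variable {f g : ℕ → ℕ} {R : ℕ}

theorem sum_le_sum_range (hf : ∀ r, R ≤ r → f r = 0) (T : Finset ℕ) :
    ∑ r ∈ T, f r ≤ ∑ r ∈ range R, f r := by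
  rw [← sum_filter_add_sum_filter_not T (· < R)]
  have hout : ∑ r ∈ T with ¬r < R, f r = 0 :=
    sum_eq_zero fun r hr => hf r (by simpa using (mem_filter.mp hr).2)
  rw [hout, add_zero]
  exact sum_le_sum_of_subset fun r hr => by simpa using (mem_filter.mp hr).2

theorem sum_le_domSum (hf : ∀ r, R ≤ r → f r = 0) {s : ℕ} {T : Finset ℕ} (hT : #T ≤ s) :
    ∑ r ∈ T, f r ≤ domSum f s :=
  le_csSup ⟨_, by rintro _ ⟨T', -, rfl⟩; exact sum_le_sum_range hf T'⟩ ⟨T, hT, rfl⟩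

theorem domSum_le {s x : ℕ} (h : ∀ T : Finset ℕ, #T ≤ s → ∑ r ∈ T, f r ≤ x) : domSum f s ≤ x :=
  csSup_le ⟨0, ∅, by simp, by simp⟩ (by rintro _ ⟨T, hT, rfl⟩; exact h T hT)

theorem domSum_eq_sum_range (hf : ∀ r, R ≤ r → f r = 0) {s : ℕ} (hs : R ≤ s) :
    domSum f s = ∑ r ∈ range R, f r :=
  (domSum_le fun T _ => sum_le_sum_range hf T).antisymm (sum_le_domSum hf (by simpa using hs))

theorem DomLE.refl (f : ℕ → ℕ) : DomLE f f := ⟨fun _ => le_rfl, 0, fun _ _ => rfl⟩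

theorem DomLE.trans {h : ℕ → ℕ} (hfg : DomLE f g) (hgh : DomLE g h) : DomLE f h := by
  obtain ⟨hle₁, N₁, heq₁⟩ := hfg
  obtain ⟨hle₂, N₂, heq₂⟩ := hgh
  exact ⟨fun s => (hle₁ s).trans (hle₂ s), max N₁ N₂, fun s hs =>
    (heq₁ s (le_of_max_le_left hs)).trans (heq₂ s (le_of_max_le_right hs))⟩

theorem DomLE.sum_range_eq (hfg : DomLE f g) (hf : ∀ r, R ≤ r → f r = 0)
    (hg : ∀ r, R ≤ r → g r = 0) : ∑ r ∈ range R, f r = ∑ r ∈ range R, g r := by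
  obtain ⟨-, N, heq⟩ := hfg
  rw [← domSum_eq_sum_range hf (le_max_right N R), ← domSum_eq_sum_range hg (le_max_right N R),
    heq _ (le_max_left N R)]

variable {i i' : ℕ}

theorem sum_eq_sum_sdiff_add_add {M : Type*} [AddCommMonoid M] (φ : ℕ → M) {T : Finset ℕ}
    (hii : i ≠ i') (hi : i ∈ T) (hi' : i' ∈ T) :
    ∑ r ∈ T, φ r = ∑ r ∈ T \ {i, i'}, φ r + (φ i + φ i') := by
  rw [← sum_pair hii, sum_sdiff (by simp [insert_subset_iff, hi, hi'])]

theorem sum_le_domSum_of_exchange (hg : ∀ r, R ≤ r → g r = 0) (hii : i ≠ i')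
    (hoff : ∀ r, r ≠ i → r ≠ i' → f r = g r) (hmax : max (f i) (f i') ≤ max (g i) (g i'))
    {s : ℕ} {T : Finset ℕ} (hT : #T ≤ s) (hi : i ∈ T) (hi' : i' ∉ T) :
    ∑ r ∈ T, f r ≤ domSum g s := by
  obtain ⟨l, hl, hgl⟩ : ∃ l ∈ ({i, i'} : Finset ℕ), g l = max (g i) (g i') := by
    rcases le_total (g i) (g i') with h | h
    · exact ⟨i', by simp, (max_eq_right h).symm⟩
    · exact ⟨i, by simp, (max_eq_left h).symm⟩
  have hl' : l ∉ T.erase i := by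
    simp only [mem_insert, mem_singleton] at hl
    rcases hl with rfl | rfl
    · simp
    · exact fun h => hi' (mem_of_mem_erase h)
  have hrest : ∑ r ∈ T.erase i, f r = ∑ r ∈ T.erase i, g r := sum_congr rfl fun r hr =>
    hoff r (ne_of_mem_erase hr) fun h => hi' (h ▸ mem_of_mem_erase hr)
  calc ∑ r ∈ T, f r = f i + ∑ r ∈ T.erase i, g r := by rw [← add_sum_erase T f hi, hrest]
    _ ≤ g l + ∑ r ∈ T.erase i, g r := by have := le_max_left (f i) (f i'); omega
    _ = ∑ r ∈ insert l (T.erase i), g r := (sum_insert hl').symm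
    _ ≤ domSum g s := sum_le_domSum hg <| (card_insert_le _ _).trans <| by
        rw [card_erase_of_mem hi]; have := card_pos.mpr ⟨i, hi⟩; omega

theorem domLE_of_exchange (hf : ∀ r, R ≤ r → f r = 0) (hg : ∀ r, R ≤ r → g r = 0)
    (hii : i ≠ i') (hi : i < R) (hi' : i' < R) (hoff : ∀ r, r ≠ i → r ≠ i' → f r = g r)
    (hsum : f i + f i' = g i + g i') (hmax : max (f i) (f i') ≤ max (g i) (g i')) :
    DomLE f g := by
  have hpair : ∀ T : Finset ℕ, i ∈ T → i' ∈ T → ∑ r ∈ T, f r = ∑ r ∈ T, g r :=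
    fun T hiT hi'T => by
    rw [sum_eq_sum_sdiff_add_add f hii hiT hi'T, sum_eq_sum_sdiff_add_add g hii hiT hi'T, hsum,
      sum_congr rfl fun r hr => hoff r (by aesop) (by aesop)]
  refine ⟨fun s => domSum_le fun T hT => ?_, R, fun s hs => ?_⟩
  · by_cases hiT : i ∈ T <;> by_cases hi'T : i' ∈ T
    · exact hpair T hiT hi'T ▸ sum_le_domSum hg hT
    · exact sum_le_domSum_of_exchange hg hii hoff hmax hT hiT hi'T
    · exact sum_le_domSum_of_exchange hg hii.symm (fun r h h' => hoff r h' h)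
        (by rwa [max_comm, max_comm (g i')]) hT hi'T hiT
    · rw [sum_congr rfl fun r hr => hoff r (ne_of_mem_of_not_mem hr hiT)
        (ne_of_mem_of_not_mem hr hi'T)]
      exact sum_le_domSum hg hT
  · rw [domSum_eq_sum_range hf hs, domSum_eq_sum_range hg hs]
    exact hpair _ (mem_range.mpr hi) (mem_range.mpr hi')

theorem sum_mul_lt_of_exchange (hii : i < i') (hi' : i' < R)
    (hoff : ∀ r, r ≠ i → r ≠ i' → f r = g r) (hsum : f i + f i' = g i + g i')
    (hlt : f i' < g i') : ∑ r ∈ range R, r * f r < ∑ r ∈ range R, r * g r := by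
  rw [sum_eq_sum_sdiff_add_add (fun r => r * f r) hii.ne (mem_range.mpr (hii.trans hi'))
      (mem_range.mpr hi'),
    sum_eq_sum_sdiff_add_add (fun r => r * g r) hii.ne (mem_range.mpr (hii.trans hi'))
      (mem_range.mpr hi'),
    sum_congr rfl fun r hr => by rw [hoff r (by aesop) (by aesop)]]
  have : i * f i + i' * f i' < i * g i + i' * g i' := by nlinarith
  omega

end Dominance

section Staircase

variable {n : ℕ → ℕ} {m : ℕ} {S : Set (ℕ × ℕ)}

theorem IsScSet.mem_diagram (hS : IsScSet n m S) : ∀ c ∈ S, c.2 < m ∧ c.1 < n c.2 := by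
  obtain ⟨l, ⟨hcorner, -⟩, rfl⟩ := hS
  intro c hc
  obtain ⟨t, ht, rfl⟩ := List.mem_iff_getElem.mp hc
  exact ⟨(hcorner t ht).1, (hcorner t ht).2.1⟩

theorem IsScSet.pairwise (hS : IsScSet n m S) :
    S.Pairwise fun c c' => c.1 ≠ c'.1 ∧ c.2 ≠ c'.2 := by
  obtain ⟨l, ⟨hcorner, -⟩, rfl⟩ := hS
  have : Std.Symm fun c c' : ℕ × ℕ => c.1 ≠ c'.1 ∧ c.2 ≠ c'.2 :=
    ⟨fun _ _ h => ⟨h.1.symm, h.2.symm⟩⟩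
  refine List.Pairwise.forall (List.pairwise_iff_getElem.mpr fun a b ha hb hab => ?_)
  have hmem : l[a] ∈ l.take b := List.mem_take_iff_getElem.mpr ⟨a, by omega, rfl⟩
  obtain ⟨-, -, hrow, hcol, -⟩ := hcorner b hb
  exact ⟨fun h => hrow ⟨_, hmem, h⟩, fun h => hcol ⟨_, hmem, h⟩⟩

end Staircase

section RowSums

variable {m : ℕ} {S : Set (ℕ × ℕ)} {B : ℕ × ℕ → ℕ}

theorem horW_eq_of_mem (hS : S.Pairwise fun c c' => c.1 ≠ c'.1 ∧ c.2 ≠ c'.2)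
    (hB : ∀ z ∉ S, B z = 0) {c : ℕ × ℕ} (hc : c ∈ S) (hcm : c.2 < m) : horW m B c.1 = B c := by
  rw [horW, sum_eq_single c.2]
  · intro j _ hj
    exact hB _ fun hmem => (hS hmem hc fun h => hj (congrArg Prod.snd h)).1 rfl
  · simp [hcm]

theorem horW_update_of_ne {r : ℕ} {c : ℕ × ℕ} (h : r ≠ c.1) (v : ℕ) :
    horW m (Function.update B c v) r = horW m B r :=
  sum_congr rfl fun _ _ => Function.update_of_ne (fun hc => h (congrArg Prod.fst hc)) _ _

theorem horW_eq_zero {R : ℕ} (hR : ∀ c ∈ S, c.1 < R) (hB : ∀ z ∉ S, B z = 0) {r : ℕ}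
    (hr : R ≤ r) : horW m B r = 0 :=
  sum_eq_zero fun _ _ => hB _ fun hmem => (hR _ hmem).not_ge hr

end RowSums

theorem exchange_supported_domLE_sum_mul_lt {n : ℕ → ℕ} {m : ℕ} {S : Set (ℕ × ℕ)}
    (hSY : ∀ c ∈ S, c.2 < m ∧ c.1 < n c.2)
    (hSd : S.Pairwise fun c c' => c.1 ≠ c'.1 ∧ c.2 ≠ c'.2) {R : ℕ} (hR : ∀ c ∈ S, c.1 < R)
    {B : ℕ × ℕ → ℕ} (hB : ∀ z ∉ S, B z = 0) {c c' : ℕ × ℕ} (hc : c ∈ S) (hc' : c' ∈ S)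
    (hi : c.1 < c'.1) (hlt : B c' < B c) {α : ℕ} (hα : α ≤ B c') {B' : ℕ × ℕ → ℕ}
    (hB' : B' = Function.update (Function.update B c α) c' (B c + B c' - α)) :
    (∀ z ∉ S, B' z = 0) ∧ DomLE (horW m B) (horW m B') ∧
      ∑ r ∈ range R, r * horW m B r < ∑ r ∈ range R, r * horW m B' r := by
  have hne : c ≠ c' := fun h => hi.ne (congrArg Prod.fst h)
  have hB'S : ∀ z ∉ S, B' z = 0 := fun z hz => by
    rw [hB', Function.update_of_ne (ne_of_mem_of_not_mem hc' hz).symm,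
      Function.update_of_ne (ne_of_mem_of_not_mem hc hz).symm, hB z hz]
  have hoff : ∀ r, r ≠ c.1 → r ≠ c'.1 → horW m B r = horW m B' r := fun r h h' => by
    rw [hB', horW_update_of_ne h', horW_update_of_ne h]
  have hrow : horW m B' c.1 = α := by
    rw [horW_eq_of_mem hSd hB'S hc (hSY c hc).1, hB', Function.update_of_ne hne,
      Function.update_self]
  have hrow' : horW m B' c'.1 = B c + B c' - α := by
    rw [horW_eq_of_mem hSd hB'S hc' (hSY c' hc').1, hB', Function.update_self]
  have hBrow := horW_eq_of_mem hSd hB hc (hSY c hc).1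
  have hBrow' := horW_eq_of_mem hSd hB hc' (hSY c' hc').1
  refine ⟨hB'S, domLE_of_exchange (fun r => horW_eq_zero hR hB) (fun r => horW_eq_zero hR hB'S)
    hi.ne (hR c hc) (hR c' hc') hoff ?_ ?_,
    sum_mul_lt_of_exchange hi (hR c' hc') hoff ?_ ?_⟩ <;>
  · simp only [hBrow, hBrow', hrow, hrow']
    omega

theorem monArr_mem_of_inversion {k : Type*} [Field k] [CharZero k] {n : ℕ → ℕ} {m : ℕ}
    (hmono : ∀ j j', j ≤ j' → j' < m → n j ≤ n j') {S : Set (ℕ × ℕ)}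
    (hSY : ∀ c ∈ S, c.2 < m ∧ c.1 < n c.2)
    (hSd : S.Pairwise fun c c' => c.1 ≠ c'.1 ∧ c.2 ≠ c'.2) {R : ℕ} (hrows : ∀ c ∈ S, c.1 < R)
    {M : Submodule k (MvPolynomial (YCell n m) k)}
    (hL : ∀ a b : ℕ, a < b → b < R → ∀ p ∈ M, Lop k n m a b p ∈ M)
    (hR : ∀ a b : ℕ, a < b → b < m → ∀ p ∈ M, Rop k n m a b p ∈ M)
    {B : ℕ × ℕ → ℕ} (hB : ∀ z ∉ S, B z = 0) {c c' : ℕ × ℕ} (hc : c ∈ S) (hc' : c' ∈ S)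
    (hcc' : ScLE c c') (hlt : B c' < B c)
    (hIH : ∀ B' : ℕ × ℕ → ℕ, (∀ z ∉ S, B' z = 0) → DomLE (horW m B) (horW m B') →
      ∑ r ∈ range R, r * horW m B r < ∑ r ∈ range R, r * horW m B' r →
      monArr k n m B' ∈ M) :
    monArr k n m B ∈ M := by
  obtain ⟨i, j⟩ := c
  obtain ⟨i', j'⟩ := c'
  have hne : (i, j) ≠ (i', j') := fun h => (h ▸ hlt).false
  obtain ⟨hi, hj⟩ : i < i' ∧ j' < j := by
    have := hSd hc hc' hne
    have := hcc'
    simp only [ScLE, ne_eq] at *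
    omega
  have hoffS : ∀ z, z ≠ (i', j') → z.1 = i' ∨ z.2 = j' → B z = 0 := fun z hz hz' =>
    hB z fun hzS => by have := hSd hzS hc' hz; tauto
  -- `B₀` vanishes on row `i'` and column `j'`: no other corner lies there.
  set B₀ := Function.update (Function.update B (i, j) 0) (i', j') 0
  have hupd : ∀ a b, Function.update (Function.update B₀ (i, j) a) (i', j') b =
      Function.update (Function.update B (i, j) a) (i', j') b := fun a b => by
    funext z
    simp only [B₀, Function.update_apply]
    split_ifs <;> rfl
  have hB₀ : ∀ z, z.1 = i' ∨ z.2 = j' → B₀ z = 0 := fun z hz => by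
    simp only [B₀, Function.update_apply]
    split_ifs with h₁ h₂ <;> first | rfl | exact hoffS z h₁ hz
  have hBeq :
      Function.update (Function.update B (i, j) (B (i, j))) (i', j') (B (i', j')) = B := by
    simp
  rw [← hBeq, ← hupd]
  refine monArr_update_update_mem hmono hi hj (hSY _ hc).1 (hSY _ hc').2
    (by simp [B₀, hne]) (fun b => hB₀ _ (.inl rfl))
    (fun a => hB₀ _ (.inr rfl)) (hL i i' hi (hrows _ hc')) (hR j' j hj (hSY _ hc).1) hlt.le
    fun α hα => ?_
  obtain ⟨hB'S, hdom, hmoment⟩ :=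
    exchange_supported_domLE_sum_mul_lt hSY hSd hrows hB hc hc' hi hlt hα (hupd _ _)
  exact hupd α _ ▸ hIH _ (hupd α _ ▸ hB'S) (hupd α _ ▸ hdom) (hupd α _ ▸ hmoment)

theorem supported_monomial_in_dl_span_general (k : Type*) [Field k] [CharZero k]
    (m : ℕ) (n : ℕ → ℕ)
    (hmono : ∀ j j', j ≤ j' → j' < m → n j ≤ n j')
    (S : Set (ℕ × ℕ)) (hS : IsScSet n m S)
    (A : ℕ × ℕ → ℕ) (hA : ∀ c, c ∉ S → A c = 0)
    (M : Submodule k (MvPolynomial (YCell n m) k))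
    (hgen : ∀ B : ℕ × ℕ → ℕ, DLDense S B → DomLE (horW m A) (horW m B) →
      monArr k n m B ∈ M)
    (hL : ∀ a b : ℕ, a < b → b < n (m - 1) → ∀ p ∈ M, Lop k n m a b p ∈ M)
    (hR : ∀ a b : ℕ, a < b → b < m → ∀ p ∈ M, Rop k n m a b p ∈ M) :
    monArr k n m A ∈ M := by
  set R := n (m - 1)
  have hrows : ∀ c ∈ S, c.1 < R := fun c hc => by
    have := hS.mem_diagram c hc
    exact this.2.trans_le (hmono _ _ (by omega) (by omega))
  -- Every admissible `B` has the same total row sum as `A`, so `N` bounds its row moment.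
  set N := R * ∑ r ∈ range R, horW m A r with hN
  suffices ∀ d (B : ℕ × ℕ → ℕ), N - ∑ r ∈ range R, r * horW m B r = d →
      (∀ z ∉ S, B z = 0) → DomLE (horW m A) (horW m B) → monArr k n m B ∈ M from
    this _ A rfl hA (.refl _)
  intro d
  induction d using Nat.strong_induction_on with
  | _ d IH =>
  rintro B rfl hB hAB
  by_cases hdense : DLDense S B
  · exact hgen B hdense hAB
  obtain ⟨c, c', hc, hc', hcc', hlt⟩ : ∃ c c', c ∈ S ∧ c' ∈ S ∧ ScLE c c' ∧ B c' < B c := by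
    by_contra! h
    exact hdense ⟨hB, h⟩
  refine monArr_mem_of_inversion hmono hS.mem_diagram hS.pairwise hrows hL hR hB hc hc' hcc' hlt
    fun B' hB' hBB' hlt' => IH _ ?_ B' rfl hB' (hAB.trans hBB')
  have hbound : ∑ r ∈ range R, r * horW m B' r ≤ N := by
    rw [hN, (hAB.trans hBB').sum_range_eq (fun _ => horW_eq_zero hrows hA)
      (fun _ => horW_eq_zero hrows hB'), mul_sum]
    exact sum_le_sum fun r hr => Nat.mul_le_mul_right _ (mem_range.mp hr).le
  omega

/-- Lemma 4.2.  Let `A` be an array supported on the staircase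
corners and let `λ` be the partition of its values.  Then `v^A` lies in the
smallest `k`-subspace of `k[v]` containing the monomials `v^B` for all DL-dense
arrays `B` whose value partition dominates `λ` (i.e. `B ∈ DL_n̄(μ)` with `μ ≥ λ`,
`|μ| = |λ|`) and invariant under all operators `L_{ab}` and `R_{ab}`.  (The value
partition of an array supported on `Sc_n̄` is the dominant part of its row-sum
vector `hor(·)`, since each row contains at most one staircase corner.) -/
theorem supported_monomial_in_dl_span (k : Type*) [Field k] [CharZero k]
    (m : ℕ) (hm : 0 < m) (n : ℕ → ℕ) (hn0 : 0 < n 0)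
    (hmono : ∀ j j', j ≤ j' → j' < m → n j ≤ n j')
    (S : Set (ℕ × ℕ)) (hS : IsScSet n m S)
    (A : ℕ × ℕ → ℕ) (hA : ∀ c, c ∉ S → A c = 0)
    (M : Submodule k (MvPolynomial (YCell n m) k))
    (hgen : ∀ B : ℕ × ℕ → ℕ, DLDense S B → DomLE (horW m A) (horW m B) →
      monArr k n m B ∈ M)
    (hL : ∀ a b : ℕ, a < b → b < n (m - 1) → ∀ p ∈ M, Lop k n m a b p ∈ M)
    (hR : ∀ a b : ℕ, a < b → b < m → ∀ p ∈ M, Rop k n m a b p ∈ M) :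
    monArr k n m A ∈ M :=
  supported_monomial_in_dl_span_general k m n hmono S hS A hA M hgen hL hR
end
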